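/- arXiv:1904.12441 — 10 statements merged into one kernel-verified Lean document; each statement's English description precedes it below -/
import Mathlib

section
/- Let q be an odd prime power, s a positive divisor of q+1, h a positive integer with h ≤ s-1 and s ≡ h (mod 2), and l = (q²-1)/s. Then for integers i, j with 0 ≤ i, j ≤ ((s+h)/2)·((q+1)/s) - 3, l divides qi + j + q + 1 if and only if qi + j + q + 1 = μ·l for some integer μ with (s-h)/2 + 1 ≤ μ ≤ (s+h)/2 - 1. -/
theorem stmt_2 (q s h : ℕ) (hq : IsPrimePow q) (hqodd : Odd q) (hs : 0 < s)
    (hsdvd : s ∣ q + 1) (hh : 0 < h) (hhs : h ≤ s - 1) (hpar : s % 2 = h % 2)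
    (i j : ℕ) (hi : i ≤ (s + h) / 2 * ((q + 1) / s) - 3)
    (hj : j ≤ (s + h) / 2 * ((q + 1) / s) - 3) :
    (q ^ 2 - 1) / s ∣ q * i + j + q + 1 ↔
      ∃ μ : ℕ, (s - h) / 2 + 1 ≤ μ ∧ μ ≤ (s + h) / 2 - 1 ∧
        q * i + j + q + 1 = μ * ((q ^ 2 - 1) / s) := by
  obtain ⟨t, ht⟩ := hsdvd
  have hq3 : 3 ≤ q := by
    have h1 := hq.two_le
    have h2 := Nat.odd_iff.mp hqodd
    omega
  have ht1 : 1 ≤ t := Nat.pos_of_ne_zero (by rintro rfl; simp at ht)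
  have hts : (q + 1) / s = t := by rw [ht, Nat.mul_div_cancel_left _ hs]
  have hl : (q ^ 2 - 1) / s = t * (q - 1) := by
    have h2 : q ^ 2 = s * (t * (q - 1)) + 1 := by
      obtain ⟨m, rfl⟩ : ∃ m, q = m + 3 := ⟨q - 3, by omega⟩
      have ht' : m + 4 = s * t := by omega
      have hm1 : m + 3 - 1 = m + 2 := by omega
      rw [hm1]
      calc (m+3)^2 = (m+2)*(m+4) + 1 := by ring
        _ = (m+2)*(s*t) + 1 := by rw [ht']
        _ = s * (t * (m + 2)) + 1 := by ring
    rw [Nat.sub_eq_of_eq_add h2, Nat.mul_div_cancel_left _ hs]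
  rw [hts] at hi hj
  set k := (s + h) / 2 with hkdef
  have hk2 : 2 * k = s + h := by omega
  have hsh : h + 2 ≤ s := by omega
  have hks : k + 1 ≤ s := by omega
  have hk2' : 2 ≤ k := by omega
  have hM : 3 ≤ k * t := by
    rcases Nat.lt_or_ge t 2 with h1 | h1
    · have h2 : t = 1 := by omega
      subst h2
      simp only [mul_one]
      by_contra h3
      omega
    · calc 3 ≤ 2 * 2 := by norm_num
        _ ≤ k * t := Nat.mul_le_mul hk2' h1
  -- integer cast facts
  have hqZ : (3:ℤ) ≤ (q:ℤ) := by exact_mod_cast hq3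
  have htZ : (1:ℤ) ≤ (t:ℤ) := by exact_mod_cast ht1
  have hhZ : (1:ℤ) ≤ (h:ℤ) := by exact_mod_cast hh
  have hsZ : (0:ℤ) < (s:ℤ) := by exact_mod_cast hs
  have E1 : (q:ℤ) + 1 = (s:ℤ) * (t:ℤ) := by exact_mod_cast ht
  have hk2Z : 2 * (k:ℤ) = (s:ℤ) + (h:ℤ) := by exact_mod_cast hk2
  have hksZ : (k:ℤ) + 1 ≤ (s:ℤ) := by exact_mod_cast hks
  have hiZ : (i:ℤ) ≤ (k:ℤ) * (t:ℤ) - 3 := by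
    calc (i:ℤ) ≤ ((k * t - 3 : ℕ) : ℤ) := Nat.cast_le.mpr hi
      _ = (k:ℤ) * (t:ℤ) - 3 := by rw [Nat.cast_sub hM]; push_cast; ring
  have hjZ : (j:ℤ) ≤ (k:ℤ) * (t:ℤ) - 3 := by
    calc (j:ℤ) ≤ ((k * t - 3 : ℕ) : ℤ) := Nat.cast_le.mpr hj
      _ = (k:ℤ) * (t:ℤ) - 3 := by rw [Nat.cast_sub hM]; push_cast; ring
  have p3 : (k:ℤ) * t + t ≤ (s:ℤ) * t := by
    have := mul_le_mul_of_nonneg_right hksZ (by positivity : (0:ℤ) ≤ (t:ℤ))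
    linarith [this]
  rw [hl]
  constructor
  · rintro ⟨c, hc⟩
    have hc1 : 1 ≤ c := by
      rcases Nat.eq_zero_or_pos c with rfl | h1
      · exfalso
        simp only [Nat.mul_zero] at hc
        exact Nat.succ_ne_zero _ hc
      · exact h1
    have hcZ1 : (1:ℤ) ≤ (c:ℤ) := by exact_mod_cast hc1
    have E2 : (q:ℤ) * i + j + q + 1 = (t:ℤ) * ((q:ℤ) - 1) * c := by
      have h1 : ((q * i + j + q + 1 : ℕ) : ℤ) = ((t * (q - 1) * c : ℕ) : ℤ) := by
        exact_mod_cast congrArg (Nat.cast : ℕ → ℤ) hc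
      have h2 : ((q - 1 : ℕ) : ℤ) = (q:ℤ) - 1 := by omega
      push_cast at h1
      rw [h2] at h1
      linarith [h1]
    -- upper bound
    have hub : (c:ℤ) ≤ (k:ℤ) - 1 := by
      by_contra hcon
      push_neg at hcon
      have hkc : (k:ℤ) ≤ (c:ℤ) := by omega
      have p1 : (q:ℤ) * i ≤ (q:ℤ) * ((k:ℤ) * t - 3) :=
        mul_le_mul_of_nonneg_left hiZ (by positivity)
      have p2 : (t:ℤ) * ((q:ℤ) - 1) * k ≤ (t:ℤ) * ((q:ℤ) - 1) * c :=
        mul_le_mul_of_nonneg_left hkc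
          (mul_nonneg (by positivity) (by linarith))
      linarith [p1, p2, p3, E1, E2, hjZ, htZ]
    -- lower bound
    have hlb : (k:ℤ) - h + 1 ≤ (c:ℤ) := by
      by_contra hcon
      push_neg at hcon
      have hckh : (c:ℤ) ≤ (k:ℤ) - h := by omega
      have hd : (j:ℤ) - i + 2*t*c = (s:ℤ)*t*((t:ℤ)*c - (i+1)) := by
        linear_combination E2 + ((t:ℤ)*c - i - 1) * E1
      obtain ⟨w, hwdef⟩ : ∃ w : ℤ, w = (t:ℤ)*c - (i+1) := ⟨_, rfl⟩
      rw [← hwdef] at hd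
      have hst : (0:ℤ) < (s:ℤ)*t := by positivity
      have f3 : 2*(t:ℤ)*1 ≤ 2*(t:ℤ)*c :=
        mul_le_mul_of_nonneg_left hcZ1 (by positivity)
      have f4 : (t:ℤ)*c ≤ (t:ℤ)*((k:ℤ)-h) :=
        mul_le_mul_of_nonneg_left hckh (by positivity)
      have f5 : (t:ℤ)*h ≤ (t:ℤ)*k :=
        mul_le_mul_of_nonneg_left (by omega) (by positivity)
      have q1 : (s:ℤ)*t = 2*((k:ℤ)*t) - (h:ℤ)*t := by
        linear_combination (-(t:ℤ)) * hk2Z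
      have jnn : (0:ℤ) ≤ (j:ℤ) := by positivity
      have hwlb : (-1:ℤ) < w := by
        have h5 : (s:ℤ)*t*(-1) < (s:ℤ)*t*w := by linarith [hd, f3, f5, q1, hiZ, jnn, htZ]
        exact lt_of_mul_lt_mul_left h5 (le_of_lt hst)
      have hwub : w < 2 := by
        have inn : (0:ℤ) ≤ (i:ℤ) := by positivity
        have h5 : (s:ℤ)*t*w < (s:ℤ)*t*2 := by linarith [hd, f4, q1, hjZ, inn, hiZ]
        exact lt_of_mul_lt_mul_left h5 (le_of_lt hst)
      have hw01 : w = 0 ∨ w = 1 := by omega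
      rcases hw01 with rfl | rfl
      · -- w = 0 : then t*c = i+1 and j = i - 2tc < 0
        simp only [mul_zero] at hd
        have : (t:ℤ)*c = (i:ℤ) + 1 := by linarith [hwdef]
        linarith [hd, this, f3, htZ, jnn]
      · -- w = 1
        simp only [mul_one] at hd
        have hieq : (i:ℤ) = (t:ℤ)*c - 2 := by linarith [hwdef]
        linarith [hd, hieq, hjZ, f4, q1]
    refine ⟨c, ?_, ?_, ?_⟩
    · omega
    · omega
    · rw [hc]; ring
  · rintro ⟨μ, -, -, heq⟩
    exact ⟨μ, by rw [heq]; ring⟩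
end

section
/- Let q be an odd prime power, s a positive divisor of q+1, h a positive integer with h ≤ s-1, and l = (q²-1)/s. Then for integers i, j with 0 ≤ i, j ≤ ⌊(s+h)/2⌋·((q+1)/s) - 2 and (i,j) ≠ (0,0), l divides qi + j if and only if qi + j = μ·l for some integer μ with ⌈(s-h)/2⌉ + 1 ≤ μ ≤ ⌊(s+h)/2⌋ - 1. -/
set_option maxHeartbeats 1000000 in


theorem stmt_3 (q s h : ℕ) (hq : IsPrimePow q) (hqodd : Odd q) (hs : 0 < s)
    (hsdvd : s ∣ q + 1) (hh : 0 < h) (hhs : h ≤ s - 1)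
    (i j : ℕ) (hi : i ≤ (s + h) / 2 * ((q + 1) / s) - 2)
    (hj : j ≤ (s + h) / 2 * ((q + 1) / s) - 2) (hij : (i, j) ≠ (0, 0)) :
    (q ^ 2 - 1) / s ∣ q * i + j ↔
      ∃ μ : ℕ, (s - h + 1) / 2 + 1 ≤ μ ∧ μ ≤ (s + h) / 2 - 1 ∧
        q * i + j = μ * ((q ^ 2 - 1) / s) := by
  obtain ⟨m, hm⟩ := hsdvd
  have hq2 : 2 ≤ q := hq.two_le
  have hq3 : 3 ≤ q := by obtain ⟨k, hk⟩ := hqodd; omega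
  have hs2 : 2 ≤ s := by omega
  have hm1 : 1 ≤ m := by
    rcases Nat.eq_zero_or_pos m with rfl | h1
    · simp at hm
    · exact h1
  obtain ⟨p, rfl⟩ : ∃ p, q = p + 3 := ⟨q - 3, by omega⟩
  have hmi : (p + 3 + 1) / s = m := by rw [hm, Nat.mul_div_cancel_left _ hs]
  have hl : ((p + 3) ^ 2 - 1) / s = (p + 2) * m := by
    have h1 : (p + 3) ^ 2 - 1 = s * ((p + 2) * m) := by
      have h4 : s * ((p + 2) * m) = (p + 2) * (s * m) := by ring
      rw [h4, ← hm]
      have h5 : (p + 3) ^ 2 = (p + 2) * (p + 3 + 1) + 1 := by ring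
      rw [h5, Nat.add_sub_cancel]
    rw [h1, Nat.mul_div_cancel_left _ hs]
  rw [hmi] at hi hj
  rw [hl]
  set F := (s + h) / 2 with hF
  set G := (s - h + 1) / 2 with hG
  have hFG : F + G = s := by omega
  have hF1 : 1 ≤ F := by omega
  have hij0 : ¬(i = 0 ∧ j = 0) := fun ⟨h1, h2⟩ => hij (by rw [h1, h2])
  have hFm2 : 2 ≤ F * m := by
    by_contra hc
    push_neg at hc
    have h0 : F * m - 2 = 0 := Nat.sub_eq_zero_of_le (Nat.le_of_lt hc)
    rw [h0] at hi hj
    exact hij0 ⟨Nat.le_zero.mp hi, Nat.le_zero.mp hj⟩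
  obtain ⟨B, hB⟩ : ∃ B, F * m = B + 2 := ⟨F * m - 2, (Nat.sub_add_cancel hFm2).symm⟩
  rw [hB] at hi hj
  simp only [Nat.add_sub_cancel] at hi hj
  have hiz : (i : ℤ) ≤ B := by exact_mod_cast hi
  have hjz : (j : ℤ) ≤ B := by exact_mod_cast hj
  have hBz : (B : ℤ) + 2 = (F : ℤ) * m := by exact_mod_cast hB.symm
  have hsm : (s : ℤ) * m = (p : ℤ) + 4 := by
    have h6 := hm
    zify at h6
    linarith
  have hsum : (F + G) * m = s * m := by rw [hFG]
  have hsumz : ((F : ℤ) + G) * m = (s : ℤ) * m := by exact_mod_cast hsum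
  have hmz : (1 : ℤ) ≤ m := by exact_mod_cast hm1
  constructor
  · intro hd
    obtain ⟨μ, hμ⟩ := hd
    have hμ1 : 1 ≤ μ := by
      rcases Nat.eq_zero_or_pos μ with rfl | h1
      · rw [Nat.mul_zero] at hμ
        obtain ⟨h5, h6⟩ := Nat.add_eq_zero.mp hμ
        rcases Nat.mul_eq_zero.mp h5 with h7 | h7
        · omega
        · exact absurd ⟨h7, h6⟩ hij0
      · exact h1
    have A : ((p : ℤ) + 3) * i + j = ((p : ℤ) + 2) * m * μ := by exact_mod_cast hμ
    refine ⟨μ, ?_, ?_, by rw [hμ]; ring⟩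
    · by_contra hc
      push_neg at hc
      have hcle : μ ≤ G := by omega
      have hμz : (1 : ℤ) ≤ (μ : ℤ) := by exact_mod_cast hμ1
      have hμm1 : (1 : ℤ) ≤ (μ : ℤ) * m := by nlinarith
      have hjnn : (0 : ℤ) ≤ (j : ℤ) := by positivity
      have him : (i : ℤ) + 1 ≤ (μ : ℤ) * m := by
        by_contra hcon
        push_neg at hcon
        have H : (0 : ℤ) ≤ ((p : ℤ) + 3) * ((i : ℤ) - (μ : ℤ) * m) :=
          mul_nonneg (by positivity) (by linarith)
        nlinarith [A, H, hμm1, hjnn]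
      have hkey : (j : ℤ) + (μ : ℤ) * m = ((p : ℤ) + 3) * ((μ : ℤ) * m - i) := by
        linear_combination A
      have hgeq : ((p : ℤ) + 3) * 1 ≤ ((p : ℤ) + 3) * ((μ : ℤ) * m - i) :=
        mul_le_mul_of_nonneg_left (by linarith) (by positivity)
      have hμmG : (μ : ℤ) * m ≤ (G : ℤ) * m :=
        mul_le_mul_of_nonneg_right (by exact_mod_cast hcle) (by positivity)
      linarith [hkey, hgeq, hμmG, hjz, hBz, hsumz, hsm]
    · by_contra hc
      push_neg at hc
      have hFμ : F ≤ μ := by omega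
      have hFμz : (F : ℤ) ≤ (μ : ℤ) := by exact_mod_cast hFμ
      have h1 : (F : ℤ) * (((p : ℤ) + 2) * m) ≤ (μ : ℤ) * (((p : ℤ) + 2) * m) :=
        mul_le_mul_of_nonneg_right hFμz (by positivity)
      have h2 : ((p : ℤ) + 3) * i ≤ ((p : ℤ) + 3) * B :=
        mul_le_mul_of_nonneg_left hiz (by positivity)
      have h4 : (p : ℤ) * ((B : ℤ) + 2) = (p : ℤ) * ((F : ℤ) * m) := by rw [hBz]
      have hFs1 : F + 1 ≤ s := by omega
      have h3 : ((F : ℤ) + 1) * m ≤ (s : ℤ) * m :=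
        mul_le_mul_of_nonneg_right (by exact_mod_cast hFs1) (by linarith)
      linarith [A, h1, h2, h4, h3, hjz, hBz, hsm, hmz]
  · rintro ⟨μ, -, -, heq⟩
    exact ⟨μ, by rw [heq]; ring⟩
end

section
/- Let q be an odd prime power, t an even positive divisor of q-1 with t ≥ 2, and m = (q²-1)/t. Then for all integers i, j with 0 ≤ i, j ≤ (q+1)/2 + (q-1)/t - 2, m does not divide qi + j + (q+1)/2. -/
theorem stmt_4 (q t : ℕ) (hq : IsPrimePow q) (hqodd : Odd q) (hte : Even t)
    (ht2 : 2 ≤ t) (htdvd : t ∣ q - 1) (i j : ℕ)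
    (hi : i ≤ (q + 1) / 2 + (q - 1) / t - 2)
    (hj : j ≤ (q + 1) / 2 + (q - 1) / t - 2) :
    ¬ ((q ^ 2 - 1) / t ∣ q * i + j + (q + 1) / 2) := by
  have hq2 : 2 ≤ q := hq.two_le
  have hq3 : 3 ≤ q := by rcases hqodd with ⟨r, hr⟩; omega
  obtain ⟨s, hs⟩ := htdvd
  obtain ⟨u, hu⟩ := hte
  have hu1 : 1 ≤ u := by omega
  have hs1 : 1 ≤ s := by
    rcases Nat.eq_zero_or_pos s with h | h
    · subst h; simp at hs; omega
    · exact h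
  have ht0 : 0 < t := by omega
  obtain ⟨P, hP⟩ : ∃ P, P = u * s := ⟨_, rfl⟩
  have hsdvd : s ∣ P := hP ▸ dvd_mul_left s u
  have hP0 : 0 < P := by rw [hP]; exact Nat.mul_pos (by omega) (by omega)
  have hsP : s ≤ P := Nat.le_of_dvd hP0 hsdvd
  have hqP : q = 2 * P + 1 := by
    have h2 : q - 1 = 2 * P := by rw [hP, hs, hu]; ring
    omega
  have hst : (q - 1) / t = s := by rw [hs]; exact Nat.mul_div_cancel_left s ht0
  have ha : (q + 1) / 2 = P + 1 := by omega
  have hsq : q ^ 2 - 1 = t * ((q + 1) * s) := by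
    have h2 : q ^ 2 - 1 ^ 2 = (q + 1) * (q - 1) := Nat.sq_sub_sq q 1
    rw [hs] at h2
    rw [show t * ((q + 1) * s) = (q + 1) * (t * s) by ring, ← h2]
    norm_num
  have hm : (q ^ 2 - 1) / t = (q + 1) * s := by
    rw [hsq]; exact Nat.mul_div_cancel_left _ ht0
  rw [ha, hst] at hi hj
  rw [hm, ha]
  rintro ⟨k, hk⟩
  -- hk : q * i + j + (P + 1) = (q + 1) * s * k
  have hE : (q + 1) * (s * k) + i = (q + 1) * i + (j + P + 1) := by
    have h3 : (q + 1) * (s * k) = q * i + j + (P + 1) := by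
      rw [← mul_assoc]; exact hk.symm
    rw [h3]; ring
  have e1 : ((q + 1) * (s * k) + i) % (q + 1) = i % (q + 1) := Nat.mul_add_mod _ _ _
  have e2 : ((q + 1) * i + (j + P + 1)) % (q + 1) = (j + P + 1) % (q + 1) :=
    Nat.mul_add_mod _ _ _
  have hmod : i % (q + 1) = (j + P + 1) % (q + 1) := by rw [← e1, hE, e2]
  have hi' : i % (q + 1) = i := Nat.mod_eq_of_lt (by omega)
  by_cases hcase : j + P + 1 < q + 1
  · -- then i = j + P + 1
    have hiX : i = j + P + 1 := by rw [← hi', hmod, Nat.mod_eq_of_lt hcase]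
    have hE' := hE
    rw [hiX] at hE'
    have hcanc : (q + 1) * (s * k) = (q + 1) * (j + P + 1) := Nat.add_right_cancel hE'
    have hsk : s * k = j + P + 1 := Nat.eq_of_mul_eq_mul_left (by omega) hcanc
    have h6 : s ∣ s * k - P := Nat.dvd_sub (dvd_mul_right s k) hsdvd
    rw [hsk, show j + P + 1 - P = j + 1 by omega] at h6
    have h8 : s ≤ j + 1 := Nat.le_of_dvd (by omega) h6
    omega
  · -- then j = i + P + 1
    have hge : q + 1 ≤ j + P + 1 := by omega
    have hlt2 : j + P + 1 - (q + 1) < q + 1 := by omega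
    have hmodB : (j + P + 1) % (q + 1) = j + P + 1 - (q + 1) := by
      rw [Nat.mod_eq_sub_mod hge, Nat.mod_eq_of_lt hlt2]
    have hiX : i = j + P + 1 - (q + 1) := by rw [← hi', hmod, hmodB]
    have hjX : j = i + P + 1 := by omega
    have hcanc : (q + 1) * (s * k) + i = (q + 1) * (i + 1) + i := by
      rw [hE, hjX, hqP]; ring
    have hsk : s * k = i + 1 :=
      Nat.eq_of_mul_eq_mul_left (show 0 < q + 1 by omega) (Nat.add_right_cancel hcanc)
    have h8 : s ≤ i + 1 := Nat.le_of_dvd (by omega) (hsk ▸ dvd_mul_right s k)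
    omega
end

section
/- Let q be an odd prime power, t an even divisor of q-1 with t ≥ 2, m = (q²-1)/t, and θ a fixed element of order m in the multiplicative group of F_{q²}. Then for all integers i, j with 0 ≤ i, j ≤ (q+1)/2 + (q-1)/t - 2, the sum Σ_{ν=0}^{m-1} θ^{ν(qi + j + (q+1)/2)} equals 0 in F_{q²}. -/
/-!
Write `q = 2H - 1`, so that `H = (q + 1) / 2 = u s + 1` with `t = 2u`, `s = (q - 1) / t`, and
`m = 2 s H`. The sum is a geometric sum in `θ ^ k`, which vanishes unless `m ∣ k`. Modulo `2H`
the exponent `k = q i + j + H` is `j - i + H`, and the bounds on `i, j` leave only `j = i + H`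
or `i = j + H`; then `m ∣ k` would make `s` divide `i + 1`, resp. `j + 1`, both in `(0, s)`.
-/

open Finset

theorem sum_range_orderOf_pow_mul_eq_zero {R : Type*} [Ring R] [NoZeroDivisors R] {θ : R}
    {k : ℕ} (hk : ¬ orderOf θ ∣ k) : ∑ ν ∈ range (orderOf θ), θ ^ (ν * k) = 0 := by
  have hθk : θ ^ k - 1 ≠ 0 := sub_ne_zero.2 (mt orderOf_dvd_of_pow_eq_one hk)
  have hgeom := geom_sum_mul (θ ^ k) (orderOf θ)
  rw [← pow_mul, mul_comm, pow_mul, pow_orderOf_eq_one, one_pow, sub_self] at hgeom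
  simpa only [← pow_mul, mul_comm k] using (mul_eq_zero.1 hgeom).resolve_right hθk

theorem not_mul_two_mul_dvd {H s i j : ℤ} (hsH : s < H) (hs : s ∣ H - 1)
    (hi₀ : 0 ≤ i) (hj₀ : 0 ≤ j) (hi : i ≤ H + s - 2) (hj : j ≤ H + s - 2) :
    ¬ s * (2 * H) ∣ (2 * H - 1) * i + j + H := by
  rintro ⟨c, hc⟩
  have hH : 0 < 2 * H := by linarith
  -- modulo `2 * H` the exponent is `j - i + H`, which lies strictly between `-2H` and `4H`
  obtain ⟨e, he⟩ : 2 * H ∣ j - i + H := ⟨s * c - i, by linear_combination hc⟩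
  have he₀ : 0 ≤ e := by nlinarith
  have he₁ : e ≤ 1 := by nlinarith
  obtain ⟨n, hn₀, hns, hsn⟩ : ∃ n, 0 < n ∧ n < s ∧ s ∣ n := by
    obtain rfl | rfl : e = 0 ∨ e = 1 := by omega
    · have hjH : j + H = s * c :=
        mul_left_cancel₀ hH.ne' (by linear_combination hc + (2 * H - 1) * he)
      refine ⟨j + 1, by omega, by omega, ?_⟩
      simpa [show j + H - (H - 1) = j + 1 by ring] using dvd_sub (Dvd.intro c hjH.symm) hs
    · exact ⟨i + 1, by omega, by omega,
        Dvd.intro c (mul_left_cancel₀ hH.ne' (by linear_combination hc - he)).symm⟩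
  exact absurd (Int.le_of_dvd hn₀ hsn) hns.not_ge

theorem stmt_5_general (q t : ℕ) (hqodd : Odd q) (hte : Even t)
    (ht2 : 2 ≤ t) (htdvd : t ∣ q - 1)
    (F : Type*) [Field F]
    (θ : F) (hθ : orderOf θ = (q ^ 2 - 1) / t)
    (i j : ℕ) (hi : i ≤ (q + 1) / 2 + (q - 1) / t - 2)
    (hj : j ≤ (q + 1) / 2 + (q - 1) / t - 2) :
    ∑ ν ∈ Finset.range ((q ^ 2 - 1) / t), θ ^ (ν * (q * i + j + (q + 1) / 2)) = 0 := by
  obtain ⟨w, rfl⟩ := hqodd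
  obtain ⟨u, rfl⟩ := hte
  obtain ⟨s, hs⟩ := htdvd
  have hw : w = u * s := by rw [Nat.add_sub_cancel] at hs; linarith
  have hH : (2 * w + 1 + 1) / 2 = w + 1 := by omega
  have hS : (2 * w + 1 - 1) / (u + u) = s := by
    rw [hs, Nat.mul_div_cancel_left _ (by omega)]
  have hm : ((2 * w + 1) ^ 2 - 1) / (u + u) = s * (2 * (w + 1)) := by
    rw [show (2 * w + 1) ^ 2 - 1 = (u + u) * (s * (2 * (w + 1))) by subst hw; ring_nf; omega,
      Nat.mul_div_cancel_left _ (by omega)]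
  rw [hS, hH] at hi hj
  rw [hH, ← hθ]
  refine sum_range_orderOf_pow_mul_eq_zero ?_
  rw [hθ, hm]
  obtain rfl | hs₀ := Nat.eq_zero_or_pos s
  · simp
  intro hdvd
  have hdvdZ := Int.natCast_dvd_natCast.2 hdvd
  push_cast at hdvdZ
  have hsw : s ≤ w := hw ▸ Nat.le_mul_of_pos_left s (by omega)
  refine not_mul_two_mul_dvd (H := w + 1) (s := s) (i := i) (j := j) (by omega)
    ⟨u, by rw [hw]; push_cast; ring⟩ (by positivity) (by positivity) (by omega) (by omega) ?_
  convert hdvdZ using 2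
  ring

theorem stmt_5 (q t : ℕ) (hq : IsPrimePow q) (hqodd : Odd q) (hte : Even t)
    (ht2 : 2 ≤ t) (htdvd : t ∣ q - 1)
    (F : Type*) [Field F] [Fintype F] (hF : Fintype.card F = q ^ 2)
    (θ : F) (hθ : orderOf θ = (q ^ 2 - 1) / t)
    (i j : ℕ) (hi : i ≤ (q + 1) / 2 + (q - 1) / t - 2)
    (hj : j ≤ (q + 1) / 2 + (q - 1) / t - 2) :
    ∑ ν ∈ Finset.range ((q ^ 2 - 1) / t), θ ^ (ν * (q * i + j + (q + 1) / 2)) = 0 :=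
  stmt_5_general q t hqodd hte ht2 htdvd F θ hθ i j hi hj
end

section
/- Let q be an odd prime power, s an odd divisor of q+1, h an odd positive integer with h ≤ s-1, l = (q²-1)/s, g a primitive element of F_{q²}, ξ = g^l, and c = (s-h)/2 + 1. Let A be the h×h matrix with rows indexed by 0 ≤ row ≤ h-1 where row 0 is (1,1,...,1) and row ν+1 (for 0 ≤ ν ≤ h-2) has entries ξ^{k(c+ν)} for 0 ≤ k ≤ h-1. Then the unique solution u = (u_0,...,u_{h-1}) ∈ F_{q²}^h of A·uᵀ = (1,0,...,0)ᵀ has all coordinates u_k nonzero and lying in the subfield F_q. -/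
/-!
The matrix is the Vandermonde matrix of the nodes `1` and `ξ ^ (m + i)` for `1 ≤ i < h`, where
`m = (s - h) / 2`; these are distinct powers of `ξ`, which has order `s ≥ m + h`, so the system has a
unique solution. Writing `P = ∏ (X - ξ ^ (m + i))` over `1 ≤ i < h`, the polynomial `P / P(1)`
has degree `< h`, vanishes at every node except `1` and is `1` there, so `u` is its coefficient
vector.

Comparing coefficients in `(ξX - ξ^(m+h)) P(ξX) = ξ^(h-1) (ξX - ξ^(m+1)) P(X)` gives a two-term
recursion between consecutive coefficients of `P` that never degenerates since `h - 1 < s`; it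
propagates `P_{h-1} = 1 ≠ 0` down to every coefficient.

Since `s ∣ q + 1`, Frobenius sends `ξ` to `ξ⁻¹`, and since `(m + i) + (m + h - i) = s`, it permutes
the roots of `P`. Hence it fixes `P`, and with it `P(1)` and every `u_k`.
-/

open Polynomial Finset Matrix

namespace Polynomial

variable {R : Type*} [CommRing R]

theorem prod_X_sub_C_pow_comp_C_mul_X (ζ : R) (a n : ℕ) :
    (C ζ * X - C (ζ ^ (a + n))) * (∏ i ∈ range n, (X - C (ζ ^ (a + i)))).comp (C ζ * X) =
      C (ζ ^ n) * (C ζ * X - C (ζ ^ a)) * ∏ i ∈ range n, (X - C (ζ ^ (a + i))) := by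
  have hcomp : (∏ i ∈ range n, (X - C (ζ ^ (a + i)))).comp (C ζ * X) =
      ∏ i ∈ range n, (C ζ * X - C (ζ ^ (a + i))) := by
    simp only [prod_comp, sub_comp, X_comp, C_comp]
  have hshift : ∏ i ∈ range n, (C ζ * X - C (ζ ^ (a + (i + 1)))) =
      C (ζ ^ n) * ∏ i ∈ range n, (X - C (ζ ^ (a + i))) := by
    simp_rw [← add_assoc, pow_succ', C_mul, ← mul_sub, prod_mul_distrib, prod_const, card_range,
      C_pow]
  calc _ = ∏ i ∈ range (n + 1), (C ζ * X - C (ζ ^ (a + i))) := by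
        rw [hcomp, prod_range_succ, mul_comm]
    _ = _ := by rw [prod_range_succ', hshift, add_zero]; ring

theorem natDegree_prod_X_sub_C [Nontrivial R] {ι : Type*} (s : Finset ι) (r : ι → R) :
    (∏ i ∈ s, (X - C (r i))).natDegree = s.card := by
  rw [natDegree_prod_of_monic _ _ fun i _ => monic_X_sub_C _]
  simp only [natDegree_X_sub_C, sum_const, smul_eq_mul, mul_one]

theorem coeff_prod_X_sub_C_pow_ne_zero [IsDomain R] {ζ : R} (a : ℕ) {n : ℕ}
    (hn : n < orderOf ζ) {k : ℕ} (hk : k ≤ n) :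
    (∏ i ∈ range n, (X - C (ζ ^ (a + i)))).coeff k ≠ 0 := by
  set P := ∏ i ∈ range n, (X - C (ζ ^ (a + i)))
  have hζ : ζ ≠ 0 := (orderOf_pos_iff.mp (by omega)).isUnit.ne_zero
  have hrec : ∀ j, ζ * (ζ ^ j - ζ ^ n) * P.coeff j =
      ζ ^ (a + n) * (ζ ^ (j + 1) - 1) * P.coeff (j + 1) := by
    intro j
    have h := congrArg (coeff · (j + 1)) (prod_X_sub_C_pow_comp_C_mul_X ζ a n)
    simp only [sub_mul, mul_sub, mul_assoc, coeff_sub, coeff_C_mul, coeff_X_mul,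
      comp_C_mul_X_coeff] at h
    linear_combination h
  induction hk using Nat.decreasingInduction with
  | self =>
    have hP : P.coeff n = 1 := by
      have := (monic_prod_X_sub_C (fun i => ζ ^ (a + i)) (range n)).coeff_natDegree
      rwa [natDegree_prod_X_sub_C, card_range] at this
    exact hP ▸ one_ne_zero
  | of_succ j hj ih =>
    intro h0
    have := hrec j
    rw [h0, mul_zero, eq_comm] at this
    exact mul_ne_zero (mul_ne_zero (pow_ne_zero _ hζ)
      (sub_ne_zero.mpr (pow_ne_one_of_lt_orderOf (by omega) (by omega)))) ih this

theorem map_prod_X_sub_C_of_reflect (f : R →+* R) (r : ℕ → R) (n : ℕ)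
    (hf : ∀ i < n, f (r i) = r (n - 1 - i)) :
    (∏ i ∈ range n, (X - C (r i))).map f = ∏ i ∈ range n, (X - C (r i)) := by
  rw [Polynomial.map_prod, ← prod_range_reflect (fun i => X - C (r i))]
  refine prod_congr rfl fun i hi => ?_
  rw [Polynomial.map_sub, map_X, map_C, hf i (mem_range.mp hi)]

end Polynomial

namespace Matrix

theorem vandermonde_mulVec_coeff {R : Type*} [CommRing R] {n : ℕ} (v : Fin n → R)
    {p : R[X]} (hp : p.natDegree < n) :
    vandermonde v *ᵥ (fun k => p.coeff k) = fun i => p.eval (v i) := by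
  ext i
  rw [eval_eq_sum_range' hp, ← Fin.sum_univ_eq_sum_range]
  simp only [mulVec, dotProduct, vandermonde_apply, mul_comm]

end Matrix

section Nodes

variable {F : Type*} [Field F] (ζ : F) (m h : ℕ)

/-- In the paper's indexing, row `ν + 1` has node `ξ ^ (c + ν)` with `c = m + 1`. -/
def nodeExp (i : ℕ) : ℕ := if i = 0 then 0 else m + i

noncomputable def nodePoly : F[X] := ∏ i ∈ range (h - 1), (X - C (ζ ^ (m + 1 + i)))

noncomputable def nodeSolution : Fin h → F :=
  ((nodePoly ζ m h).eval 1)⁻¹ • fun k : Fin h => (nodePoly ζ m h).coeff k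

variable {ζ m h}

theorem nodeExp_injective : Function.Injective fun i : Fin h => nodeExp m i := by
  intro i j hij
  simp only [nodeExp] at hij
  split_ifs at hij <;> omega

theorem det_vandermonde_nodes_ne_zero (hζ : m + h ≤ orderOf ζ) :
    (vandermonde fun i : Fin h => ζ ^ nodeExp m i).det ≠ 0 := by
  refine det_vandermonde_ne_zero_iff.mpr fun i j hij => nodeExp_injective (m := m) ?_
  have hlt : ∀ i : Fin h, nodeExp m i < orderOf ζ := fun i => by
    unfold nodeExp; split_ifs <;> omega
  exact pow_injOn_Iio_orderOf (hlt i) (hlt j) hij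

theorem eval_nodePoly_one_ne_zero (hζ : m + h ≤ orderOf ζ) : (nodePoly ζ m h).eval 1 ≠ 0 := by
  simp only [nodePoly, eval_prod, eval_sub, eval_X, eval_C]
  exact prod_ne_zero_iff.mpr fun i hi => sub_ne_zero.mpr
    (pow_ne_one_of_lt_orderOf (by omega) (by simp at hi; omega)).symm

theorem eval_nodePoly_node {i : ℕ} (hi : 0 < i) (hih : i < h) :
    (nodePoly ζ m h).eval (ζ ^ (m + i)) = 0 := by
  simp only [nodePoly, eval_prod, eval_sub, eval_X, eval_C]
  exact prod_eq_zero (i := i - 1) (by simp; omega) (by rw [sub_eq_zero]; congr 1; omega)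

theorem vandermonde_mulVec_nodeSolution (hh : 0 < h) (hζ : m + h ≤ orderOf ζ) :
    vandermonde (fun i : Fin h => ζ ^ nodeExp m i) *ᵥ nodeSolution ζ m h =
      fun i : Fin h => if (i : ℕ) = 0 then (1 : F) else 0 := by
  have hdeg : (nodePoly ζ m h).natDegree < h := by
    rw [nodePoly, natDegree_prod_X_sub_C, card_range]
    omega
  rw [nodeSolution, mulVec_smul, vandermonde_mulVec_coeff _ hdeg]
  ext i
  by_cases hi : (i : ℕ) = 0
  · simp [hi, nodeExp, eval_nodePoly_one_ne_zero hζ]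
  · simp [hi, nodeExp, eval_nodePoly_node (Nat.pos_of_ne_zero hi) i.isLt]

theorem nodeSolution_ne_zero (hζ : m + h ≤ orderOf ζ) (k : Fin h) : nodeSolution ζ m h k ≠ 0 :=
  mul_ne_zero (inv_ne_zero (eval_nodePoly_one_ne_zero hζ))
    (coeff_prod_X_sub_C_pow_ne_zero _ (by have := k.isLt; omega) (by have := k.isLt; omega))

theorem map_nodePoly (f : F →+* F) (hf : f ζ * ζ = 1) (hζ : ζ ^ (2 * m + h) = 1) :
    (nodePoly ζ m h).map f = nodePoly ζ m h := by
  refine map_prod_X_sub_C_of_reflect f _ _ fun i hi => ?_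
  have hinv : ∀ e, f (ζ ^ e) * ζ ^ e = 1 := fun e => by rw [map_pow, ← mul_pow, hf, one_pow]
  have hpair : ζ ^ (m + 1 + (h - 1 - 1 - i)) * ζ ^ (m + 1 + i) = 1 := by
    rw [← pow_add, ← hζ]; congr 1; omega
  exact mul_right_cancel₀ (right_ne_zero_of_mul_eq_one hpair) ((hinv _).trans hpair.symm)

theorem map_nodeSolution (f : F →+* F) (hf : f ζ * ζ = 1) (hζ : ζ ^ (2 * m + h) = 1) (k : Fin h) :
    f (nodeSolution ζ m h k) = nodeSolution ζ m h k := by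
  have hcoeff := congrArg (coeff · k) (map_nodePoly f hf hζ)
  have heval := congrArg (eval (f 1)) (map_nodePoly f hf hζ)
  simp only [coeff_map] at hcoeff
  rw [eval_map_apply, map_one] at heval
  simp [nodeSolution, hcoeff, heval]

end Nodes

theorem stmt_8_general (q s h : ℕ) (hq : IsPrimePow q)
    (hsodd : Odd s) (hsdvd : s ∣ q + 1)
    (hhodd : Odd h) (hhs : h ≤ s - 1)
    (F : Type*) [Field F] [Fintype F] (hF : Fintype.card F = q ^ 2)
    (g : F) (hg : orderOf g = q ^ 2 - 1) :
    let A : Matrix (Fin h) (Fin h) F := Matrix.of fun i k =>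
      if (i : ℕ) = 0 then (1 : F)
      else (g ^ ((q ^ 2 - 1) / s)) ^ ((k : ℕ) * ((s - h) / 2 + (i : ℕ)))
    let e : Fin h → F := fun i => if (i : ℕ) = 0 then 1 else 0
    (∃! u : Fin h → F, A.mulVec u = e) ∧
      ∀ u : Fin h → F, A.mulVec u = e → ∀ k, u k ≠ 0 ∧ (u k) ^ q = u k := by
  intro A e
  set ζ := g ^ ((q ^ 2 - 1) / s)
  set m := (s - h) / 2
  have hζ : orderOf ζ = s := by
    have hq2 : 1 < q ^ 2 := Nat.one_lt_pow two_ne_zero hq.one_lt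
    have hdvd : s ∣ q ^ 2 - 1 :=
      hsdvd.trans (Dvd.intro (q - 1) (by simpa using (Nat.sq_sub_sq q 1).symm))
    simpa [hg] using orderOf_pow_orderOf_div (x := g) (by rw [hg]; omega) (hg ▸ hdvd)
  have hms : 2 * m + h = s := by obtain ⟨_, _⟩ := hsodd; obtain ⟨_, _⟩ := hhodd; omega
  have hA : A = vandermonde fun i : Fin h => ζ ^ nodeExp m i := by
    ext i k
    by_cases hi : (i : ℕ) = 0
    · simp [A, hi, nodeExp]
    · simp only [A, of_apply, hi, if_false, vandermonde_apply, nodeExp]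
      exact pow_mul' ζ _ _
  have hsol : A *ᵥ nodeSolution ζ m h = e :=
    hA ▸ vandermonde_mulVec_nodeSolution hhodd.pos (by omega)
  have huniq : ∀ u, A *ᵥ u = e → u = nodeSolution ζ m h := fun u hu =>
    mulVec_injective_iff_isUnit.mpr ((A.isUnit_iff_isUnit_det).mpr
      (hA ▸ det_vandermonde_nodes_ne_zero (by omega)).isUnit) (hu.trans hsol.symm)
  refine ⟨⟨_, hsol, huniq⟩, fun u hu k => huniq u hu ▸ ⟨nodeSolution_ne_zero (by omega) k, ?_⟩⟩
  obtain ⟨p, r, hp, -, rfl⟩ := hq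
  have : Fact p.Prime := ⟨Nat.prime_iff.mpr hp⟩
  have : CharP F p := charP_of_card_eq_prime_pow (hF.trans (pow_mul p r 2).symm)
  refine map_nodeSolution (iterateFrobenius F p r) ?_ (hms ▸ hζ ▸ pow_orderOf_eq_one ζ) k
  rw [iterateFrobenius_def, ← pow_succ, ← orderOf_dvd_iff_pow_eq_one, hζ]
  exact hsdvd

theorem stmt_8 (q s h : ℕ) (hq : IsPrimePow q) (hqodd : Odd q)
    (hsodd : Odd s) (hsdvd : s ∣ q + 1)
    (hh : 0 < h) (hhodd : Odd h) (hhs : h ≤ s - 1)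
    (F : Type*) [Field F] [Fintype F] (hF : Fintype.card F = q ^ 2)
    (g : F) (hg : orderOf g = q ^ 2 - 1) :
    let A : Matrix (Fin h) (Fin h) F := Matrix.of fun i k =>
      if (i : ℕ) = 0 then (1 : F)
      else (g ^ ((q ^ 2 - 1) / s)) ^ ((k : ℕ) * ((s - h) / 2 + (i : ℕ)))
    let e : Fin h → F := fun i => if (i : ℕ) = 0 then 1 else 0
    (∃! u : Fin h → F, A.mulVec u = e) ∧
      ∀ u : Fin h → F, A.mulVec u = e → ∀ k, u k ≠ 0 ∧ (u k) ^ q = u k :=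
  stmt_8_general q s h hq hsodd hsdvd hhodd hhs F hF g hg
end

section
/- Let q be an odd prime power, s an odd divisor of q+1, h an odd integer with 1 ≤ h ≤ s-1, and l = (q²-1)/s. Then there exist u_0, u_1, ..., u_{h-1} ∈ F_q^* (nonzero elements of the subfield F_q of F_{q²}) such that u_0 + u_1 + ... + u_{h-1} = 1 and Σ_{k=0}^{h-1} g^{kμl} u_k = 0 for every integer μ with (s-h)/2 + 1 ≤ μ ≤ (s+h)/2 - 1, where g is a primitive element of F_{q²}. -/
/-!
Put `ζ = g ^ l`, a primitive `s`-th root of unity, and write `s = 2m + h`. The polynomial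
`Q = ∏_{j=1}^{h-1} (X - ζ^(m+j))` vanishes at `ζ^μ` for every `μ` in the required range, so
`u_k = Q_k / Q(1)` satisfies the linear conditions and sums to `1`. Since `ζ^q = ζ⁻¹`, the
Frobenius `x ↦ x^q` maps the root `ζ^(m+j)` to `ζ^(m+h-j)`, so it fixes `Q` and the `u_k` lie in
`F_q`. The coefficients of `Q` are, up to nonzero factors, Gaussian binomial coefficients in `ζ`:
substituting `ζX` for `X` yields a recursion between consecutive coefficients whose factors
`ζ^t - 1` (`0 < t < s`) never vanish, so all of them are nonzero.
-/

open Polynomial Finset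

noncomputable def geomRootsPoly {R : Type*} [CommRing R] (c ζ : R) (n : ℕ) : R[X] :=
  ∏ j ∈ range n, (X - C (c * ζ ^ (j + 1)))

section geomRootsPoly

variable {R : Type*} [CommRing R]

theorem geomRootsPoly_monic (c ζ : R) (n : ℕ) : (geomRootsPoly c ζ n).Monic :=
  monic_prod_of_monic _ _ fun _ _ => monic_X_sub_C _

theorem natDegree_geomRootsPoly [Nontrivial R] (c ζ : R) (n : ℕ) :
    (geomRootsPoly c ζ n).natDegree = n := by
  rw [geomRootsPoly, natDegree_prod_of_monic _ _ fun _ _ => monic_X_sub_C _]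
  simp only [natDegree_X_sub_C, sum_const, card_range, smul_eq_mul, mul_one]

theorem map_geomRootsPoly_eq_self (φ : R →+* R) {c ζ : R} {n : ℕ} (hζ : ζ * φ ζ = 1)
    (hc : φ c = c * ζ ^ (n + 1)) : (geomRootsPoly c ζ n).map φ = geomRootsPoly c ζ n := by
  have hroot : ∀ j < n, φ (c * ζ ^ (n - 1 - j + 1)) = c * ζ ^ (j + 1) := by
    intro j hj
    calc φ (c * ζ ^ (n - 1 - j + 1)) = c * ζ ^ (j + 1) * (ζ * φ ζ) ^ (n - 1 - j + 1) := by
          rw [map_mul, map_pow, hc, mul_pow, show n + 1 = j + 1 + (n - 1 - j + 1) by omega]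
          ring
      _ = c * ζ ^ (j + 1) := by rw [hζ, one_pow, mul_one]
  rw [geomRootsPoly, Polynomial.map_prod, ← prod_range_reflect]
  refine prod_congr rfl fun j hj => ?_
  rw [Polynomial.map_sub, map_X, map_C, hroot _ (mem_range.mp hj)]

theorem geomRootsPoly_comp_C_mul_X (c ζ : R) (n : ℕ) :
    (X - C (c * ζ ^ n)) * (geomRootsPoly c ζ n).comp (C ζ * X) =
      C (ζ ^ n) * ((X - C c) * geomRootsPoly c ζ n) := by
  have hcomp : (geomRootsPoly c ζ n).comp (C ζ * X) =
      C (ζ ^ n) * ∏ j ∈ range n, (X - C (c * ζ ^ j)) := by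
    rw [geomRootsPoly, Polynomial.prod_comp, C_pow, pow_eq_prod_const, ← prod_mul_distrib]
    refine prod_congr rfl fun j _ => ?_
    rw [sub_comp, X_comp, C_comp]
    simp only [map_mul, map_pow]
    ring
  have hshift : (X - C c) * geomRootsPoly c ζ n =
      (∏ j ∈ range n, (X - C (c * ζ ^ j))) * (X - C (c * ζ ^ n)) := by
    rw [← prod_range_succ (fun j => X - C (c * ζ ^ j)), prod_range_succ', pow_zero, mul_one,
      mul_comm, geomRootsPoly]
  rw [hcomp, hshift]
  ring

theorem geomRootsPoly_coeff_recurrence (c ζ : R) (n k : ℕ) :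
    (ζ ^ k - ζ ^ n) * (geomRootsPoly c ζ n).coeff k =
      c * ζ ^ n * (ζ ^ (k + 1) - 1) * (geomRootsPoly c ζ n).coeff (k + 1) := by
  have h := congrArg (coeff · (k + 1)) (geomRootsPoly_comp_C_mul_X c ζ n)
  simp only [sub_mul, coeff_sub, coeff_X_mul, coeff_C_mul, comp_C_mul_X_coeff] at h
  linear_combination h

variable [IsDomain R]

theorem geomRootsPoly_coeff_ne_zero {c ζ : R} {n s k : ℕ} (hζ : IsPrimitiveRoot ζ s)
    (hc : c ≠ 0) (hns : n < s) (hk : k ≤ n) : (geomRootsPoly c ζ n).coeff k ≠ 0 := by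
  induction hk using Nat.decreasingInduction with
  | self =>
    have := (geomRootsPoly_monic c ζ n).coeff_natDegree
    rw [natDegree_geomRootsPoly] at this
    exact this ▸ one_ne_zero
  | of_succ k hk ih =>
    have hζ0 : ζ ≠ 0 := hζ.ne_zero (by omega)
    have hζk : ζ ^ (k + 1) - 1 ≠ 0 :=
      sub_ne_zero.mpr (hζ.pow_ne_one_of_pos_of_lt (by omega) (by omega))
    intro h0
    have h := geomRootsPoly_coeff_recurrence c ζ n k
    rw [h0, mul_zero, eq_comm] at h
    simp [hc, hζ0, hζk, ih] at h

theorem eval_geomRootsPoly_eq_zero_iff {c ζ x : R} {n : ℕ} :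
    (geomRootsPoly c ζ n).eval x = 0 ↔ ∃ j < n, x = c * ζ ^ (j + 1) := by
  simp [geomRootsPoly, eval_prod, prod_eq_zero_iff, sub_eq_zero]

end geomRootsPoly

theorem FiniteField.exists_ringHom_eq_pow {F : Type*} [Field F] [Fintype F] {q n : ℕ}
    (hq : IsPrimePow q) (hF : Fintype.card F = q ^ n) : ∃ φ : F →+* F, ∀ x, φ x = x ^ q := by
  obtain ⟨p, k, hp, -, rfl⟩ := hq
  have := Fact.mk hp.nat_prime
  have := charP_of_card_eq_prime_pow (hF.trans (pow_mul p k n).symm)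
  exact ⟨iterateFrobenius F p k, fun x => iterateFrobenius_def p k x⟩

theorem sum_range_pow_mul_coeff_div_eval_one {F : Type*} [Field F] {Q : F[X]} {h : ℕ}
    (hQ : Q.natDegree < h) (x : F) :
    ∑ k ∈ range h, x ^ k * (Q.coeff k / Q.eval 1) = Q.eval x / Q.eval 1 := by
  rw [eval_eq_sum_range' hQ x, sum_div]
  exact sum_congr rfl fun k _ => by ring

theorem stmt_9_general (q s h : ℕ) (hq : IsPrimePow q)
    (hsodd : Odd s) (hsdvd : s ∣ q + 1)
    (hhodd : Odd h) (hhs : h ≤ s - 1)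
    (F : Type*) [Field F] [Fintype F] (hF : Fintype.card F = q ^ 2)
    (g : F) (hg : orderOf g = q ^ 2 - 1) :
    ∃ u : ℕ → F, (∀ k < h, u k ≠ 0 ∧ (u k) ^ q = u k) ∧
      (∑ k ∈ Finset.range h, u k) = 1 ∧
      ∀ μ : ℕ, (s - h) / 2 + 1 ≤ μ → μ ≤ (s + h) / 2 - 1 →
        ∑ k ∈ Finset.range h, g ^ (k * μ * ((q ^ 2 - 1) / s)) * u k = 0 := by
  obtain ⟨φ, hφ⟩ := FiniteField.exists_ringHom_eq_pow hq hF
  obtain ⟨m, hm⟩ : ∃ m, s = 2 * m + h := by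
    obtain ⟨a, rfl⟩ := hsodd
    obtain ⟨b, rfl⟩ := hhodd
    exact ⟨a - b, by omega⟩
  have hh_pos := hhodd.pos
  have hs : s ∣ q ^ 2 - 1 := by
    rw [← one_pow 2, Nat.sq_sub_sq]
    exact hsdvd.mul_right _
  set ζ := g ^ ((q ^ 2 - 1) / s)
  have hζ : IsPrimitiveRoot ζ s := (hg ▸ IsPrimitiveRoot.orderOf g).pow
    (Nat.sub_pos_of_lt (Nat.one_lt_pow two_ne_zero hq.one_lt)) (Nat.div_mul_cancel hs).symm
  have hζφ : ζ * φ ζ = 1 := by rw [hφ, ← pow_succ', hζ.pow_eq_one_iff_dvd]; exact hsdvd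
  set Q := geomRootsPoly (ζ ^ m) ζ (h - 1)
  have hQφ : Q.map φ = Q := map_geomRootsPoly_eq_self φ hζφ <|
    calc φ (ζ ^ m) = φ ζ ^ m * ζ ^ s := by rw [map_pow, hζ.pow_eq_one, mul_one]
      _ = (ζ * φ ζ) ^ m * (ζ ^ m * ζ ^ (h - 1 + 1)) := by
        rw [Nat.sub_add_cancel hh_pos, hm]; ring
      _ = ζ ^ m * ζ ^ (h - 1 + 1) := by rw [hζφ, one_pow, one_mul]
  have hQdeg : Q.natDegree < h := by rw [natDegree_geomRootsPoly]; omega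
  have hQ1 : Q.eval 1 ≠ 0 := by
    rintro hQ1
    obtain ⟨j, hj, h1⟩ := eval_geomRootsPoly_eq_zero_iff.mp hQ1
    rw [← pow_add] at h1
    exact hζ.pow_ne_one_of_pos_of_lt (by omega) (by omega) h1.symm
  refine ⟨fun k => Q.coeff k / Q.eval 1, fun k hk => ⟨?_, ?_⟩, ?_, fun μ hμm hμh => ?_⟩
  · exact div_ne_zero (geomRootsPoly_coeff_ne_zero hζ (pow_ne_zero _ (hζ.ne_zero (by omega)))
      (by omega) (by omega)) hQ1
  · rw [← hφ, map_div₀, ← coeff_map, ← eval_one_map, hQφ]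
  · simpa only [one_pow, one_mul, div_self hQ1] using sum_range_pow_mul_coeff_div_eval_one hQdeg 1
  · have hroot : Q.eval (ζ ^ μ) = 0 := eval_geomRootsPoly_eq_zero_iff.mpr
      ⟨μ - m - 1, by omega, by rw [← pow_add]; congr 1; omega⟩
    calc ∑ k ∈ range h, g ^ (k * μ * ((q ^ 2 - 1) / s)) * (Q.coeff k / Q.eval 1)
        = ∑ k ∈ range h, (ζ ^ μ) ^ k * (Q.coeff k / Q.eval 1) :=
          sum_congr rfl fun k _ => by rw [← pow_mul, ← pow_mul, mul_comm (_ / s), mul_comm μ]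
      _ = 0 := by rw [sum_range_pow_mul_coeff_div_eval_one hQdeg, hroot, zero_div]

theorem stmt_9 (q s h : ℕ) (hq : IsPrimePow q) (hqodd : Odd q)
    (hsodd : Odd s) (hsdvd : s ∣ q + 1)
    (hh : 1 ≤ h) (hhodd : Odd h) (hhs : h ≤ s - 1)
    (F : Type*) [Field F] [Fintype F] (hF : Fintype.card F = q ^ 2)
    (g : F) (hg : orderOf g = q ^ 2 - 1) :
    ∃ u : ℕ → F, (∀ k < h, u k ≠ 0 ∧ (u k) ^ q = u k) ∧
      (∑ k ∈ Finset.range h, u k) = 1 ∧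
      ∀ μ : ℕ, (s - h) / 2 + 1 ≤ μ → μ ≤ (s + h) / 2 - 1 →
        ∑ k ∈ Finset.range h, g ^ (k * μ * ((q ^ 2 - 1) / s)) * u k = 0 :=
  stmt_9_general q s h hq hsodd hsdvd hhodd hhs F hF g hg
end

section
/- Let q be an odd prime power, s an odd divisor of q+1, h an integer with 1 ≤ h ≤ s-1, l = (q²-1)/s, and g a primitive element of F_{q²}. Then there exist u_0, ..., u_{h-1} ∈ F_q^* such that Σ_{k=0}^{h-1} g^{k(μl - q - 1)} u_k = 0 for every integer μ with ⌈(s-h)/2⌉ + 1 ≤ μ ≤ ⌊(s+h)/2⌋ - 1. -/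
/-!
Write `c = g^(q+1)`, an element of `𝔽_q^*` of order `q - 1`, and `ζ = g^l`, of order `s`. Then
`g^(μl - q - 1) = c⁻¹ ζ^μ`, and the sum in question is `Q(c⁻¹ ζ^μ)` for the polynomial
`Q = ∑ u_k X^k`, so it suffices to find `Q` of degree `h - 1` with all coefficients in `𝔽_q^*`
vanishing on the window `a ≤ μ ≤ b` of the statement. Since `a + b = s` and Frobenius fixes `c`
and inverts `ζ`, it permutes the roots `c⁻¹ ζ^μ`, so `∏ (X - c⁻¹ ζ^μ)` has coefficients in `𝔽_q`.
They are nonzero: for a geometric progression of `n` roots with ratio `ζ`, consecutive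
coefficients are linked by a two-term recurrence whose factors `ζ^(k+1) - 1` do not vanish as long
as `n < orderOf ζ`. The window has `h - 1` or `h - 2` elements; in the second case multiply by
`X - d` for some `d ∈ 𝔽_q^*` avoiding the `h - 2` ratios of consecutive
coefficients, which is possible as `h - 2 < q - 1`.
-/

open Polynomial Finset

lemma exists_ringHom_eq_pow_of_card_eq_pow {F : Type*} [Field F] [Fintype F] {q m : ℕ}
    (hF : Fintype.card F = q ^ m) (hm : m ≠ 0) : ∃ φ : F →+* F, ∀ x, φ x = x ^ q := by
  obtain ⟨p, e, hp, -, rfl⟩ :=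
    (isPrimePow_pow_iff hm).mp (hF ▸ Fintype.isPrimePow_card_of_field)
  have := Fact.mk hp.nat_prime
  have : CharP F p := charP_of_card_eq_prime_pow (f := e * m) (by rw [hF, pow_mul])
  exact ⟨iterateFrobenius F p e, fun x => iterateFrobenius_def p e x⟩

lemma orderOf_pow_of_orderOf_eq_mul {G : Type*} [Monoid G] {x : G} {m n : ℕ}
    (h : orderOf x = m * n) (hn : 0 < n) : orderOf (x ^ n) = m := by
  rw [orderOf_pow_of_dvd hn.ne' (h ▸ dvd_mul_left n m), h, Nat.mul_div_cancel _ hn]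

lemma exists_val_pow_notMem {M : Type*} [Monoid M] (w : Mˣ) (S : Finset M)
    (hS : #S < orderOf w) : ∃ i, ((w ^ i : Mˣ) : M) ∉ S := by
  classical
  have hinj : Set.InjOn (fun i => ((w ^ i : Mˣ) : M)) (range (orderOf w)) := fun i hi j hj hij =>
    pow_injOn_Iio_orderOf (by simpa using hi) (by simpa using hj) (Units.ext hij)
  obtain ⟨_, hx, hxS⟩ := exists_mem_notMem_of_card_lt_card (s := S)
    (t := (range (orderOf w)).image fun i => ((w ^ i : Mˣ) : M))
    (by rwa [card_image_of_injOn hinj, card_range])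
  obtain ⟨i, -, rfl⟩ := mem_image.mp hx
  exact ⟨i, hxS⟩

namespace Polynomial

section CommRing

variable {R : Type*} [CommRing R]

section GeomPoly

variable (t ζ : R) (n : ℕ)

noncomputable def geomPoly : R[X] := ∏ i ∈ range n, (X - C (t * ζ ^ i))

lemma geomPoly_monic : (geomPoly t ζ n).Monic :=
  monic_prod_of_monic _ _ fun _ _ => monic_X_sub_C _

lemma natDegree_geomPoly [Nontrivial R] : (geomPoly t ζ n).natDegree = n := by
  rw [geomPoly, natDegree_prod_of_monic _ _ fun _ _ => monic_X_sub_C _]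
  simp only [natDegree_X_sub_C, sum_const, card_range, smul_eq_mul, mul_one]

lemma isRoot_geomPoly {i : ℕ} (hi : i < n) : (geomPoly t ζ n).IsRoot (t * ζ ^ i) := by
  rw [IsRoot, geomPoly, eval_prod]
  exact prod_eq_zero (mem_range.mpr hi) (by rw [eval_sub, eval_X, eval_C, sub_self])

lemma geomPoly_comp_C_mul_X :
    (geomPoly t ζ n).comp (C ζ * X) * (C ζ * X - C (t * ζ ^ n)) =
      C (ζ ^ n) * (C ζ * X - C t) * geomPoly t ζ n := by
  have shift : ∏ i ∈ range n, (C ζ * X - C (t * ζ ^ (i + 1))) = C (ζ ^ n) * geomPoly t ζ n := by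
    rw [geomPoly, C_pow, ← card_range n, ← prod_const, card_range, ← prod_mul_distrib]
    exact prod_congr rfl fun i _ => by rw [mul_sub, ← C_mul, mul_left_comm, ← pow_succ']
  calc (geomPoly t ζ n).comp (C ζ * X) * (C ζ * X - C (t * ζ ^ n))
      = ∏ i ∈ range (n + 1), (C ζ * X - C (t * ζ ^ i)) := by
        simp [geomPoly, prod_comp, prod_range_succ]
    _ = C (ζ ^ n) * (C ζ * X - C t) * geomPoly t ζ n := by
        rw [prod_range_succ', shift, pow_zero, mul_one]; ring

lemma coeff_geomPoly_recurrence (k : ℕ) :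
    (ζ ^ (k + 1) - ζ ^ (n + 1)) * (geomPoly t ζ n).coeff k =
      t * ζ ^ n * (ζ ^ (k + 1) - 1) * (geomPoly t ζ n).coeff (k + 1) := by
  have h := congrArg (coeff · (k + 1)) (geomPoly_comp_C_mul_X t ζ n)
  rw [mul_sub, ← mul_assoc, mul_assoc (C (ζ ^ n)), sub_mul, mul_assoc (C ζ)] at h
  simp only [coeff_sub, coeff_mul_X, coeff_mul_C, coeff_C_mul, coeff_X_mul, comp_C_mul_X_coeff] at h
  linear_combination h

lemma coeff_geomPoly_ne_zero [IsDomain R] {t ζ : R} {n : ℕ} (ht : t ≠ 0) (hζ : n < orderOf ζ)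
    {k : ℕ} (hk : k ≤ n) : (geomPoly t ζ n).coeff k ≠ 0 := by
  have hζ0 : ζ ≠ 0 := by
    rintro rfl
    simp at hζ
  induction hk using Nat.decreasingInduction with
  | self =>
    have := (geomPoly_monic t ζ n).coeff_natDegree
    rw [natDegree_geomPoly] at this
    exact this ▸ one_ne_zero
  | of_succ k hkn ih =>
    intro h0
    have hζk : ζ ^ (k + 1) - 1 ≠ 0 :=
      sub_ne_zero.mpr (pow_ne_one_of_lt_orderOf k.succ_ne_zero (by omega))
    have := coeff_geomPoly_recurrence t ζ n k
    rw [h0, mul_zero, eq_comm] at this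
    exact mul_ne_zero (mul_ne_zero (mul_ne_zero ht (pow_ne_zero n hζ0)) hζk) ih this

end GeomPoly

lemma map_prod_X_sub_C_eq_self_of_reflect (φ : R →+* R) (f : ℕ → R)
    {n : ℕ} (hf : ∀ i < n, φ (f i) = f (n - 1 - i)) :
    (∏ i ∈ range n, (X - C (f i))).map φ = ∏ i ∈ range n, (X - C (f i)) := by
  rw [Polynomial.map_prod, ← prod_range_reflect (fun i => X - C (f i)) n]
  exact prod_congr rfl fun i hi => by
    rw [Polynomial.map_sub, map_X, map_C, hf i (mem_range.mp hi)]

lemma coeff_mul_X_sub_C_ne_zero [IsDomain R] {p : R[X]} {c : R}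
    {n : ℕ} (hp : ∀ k ≤ n, p.coeff k ≠ 0) (hpn : p.coeff (n + 1) = 0) (hc : c ≠ 0)
    (hpc : ∀ k < n, p.coeff k ≠ p.coeff (k + 1) * c) {k : ℕ} (hk : k ≤ n + 1) :
    (p * (X - C c)).coeff k ≠ 0 := by
  rcases k with _ | k
  · simpa [mul_coeff_zero] using And.intro (hp 0 (Nat.zero_le n)) hc
  · rw [coeff_mul_X_sub_C, sub_ne_zero]
    rcases (Nat.lt_succ_iff_lt_or_eq.mp hk) with hkn | rfl
    · exact hpc k hkn
    · rw [hpn, zero_mul]; exact hp k le_rfl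

lemma sum_range_zpow_mul_coeff_eq_eval (x : Rˣ) (e : ℤ) {Q : R[X]}
    {h : ℕ} (hQ : Q.natDegree < h) :
    ∑ k ∈ range h, ((x ^ ((k : ℤ) * e) : Rˣ) : R) * Q.coeff k = Q.eval ((x ^ e : Rˣ) : R) := by
  rw [eval_eq_sum_range' hQ]
  refine sum_congr rfl fun k _ => ?_
  rw [mul_comm (k : ℤ), zpow_mul, zpow_natCast, Units.val_pow_eq_pow_val, mul_comm]

end CommRing

section Field

variable {F : Type*} [Field F]

lemma exists_fixed_coeff_mul_X_sub_C_ne_zero (φ : F →+* F) {p : F[X]}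
    {n : ℕ} (hp : ∀ k ≤ n, p.coeff k ≠ 0) (hpn : p.coeff (n + 1) = 0) {w : Fˣ}
    (hw : φ w = w) (hnw : n < orderOf w) :
    ∃ c : F, φ c = c ∧ ∀ k ≤ n + 1, (p * (X - C c)).coeff k ≠ 0 := by
  classical
  obtain ⟨i, hi⟩ := exists_val_pow_notMem w ((range n).image fun k => p.coeff k / p.coeff (k + 1))
    (card_image_le.trans_lt (by rwa [card_range]))
  refine ⟨(w ^ i : Fˣ), by rw [Units.val_pow_eq_pow_val, map_pow, hw],
    fun _ => coeff_mul_X_sub_C_ne_zero hp hpn (Units.ne_zero _) fun k hk h => hi ?_⟩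
  exact mem_image.mpr ⟨k, mem_range.mpr hk, by rw [div_eq_iff (hp (k + 1) hk), h, mul_comm]⟩

theorem exists_fixed_poly_isRoot_window (φ : F →+* F) {c ζ : Fˣ}
    (hc : φ c = c) (hζ : φ ζ * ζ = 1) {a b m : ℕ} (hab : orderOf ζ ∣ a + b)
    (hnζ : b + 1 - a < orderOf ζ) (hnc : b + 1 - a < orderOf c)
    (hm : b + 1 - a ≤ m) (hm' : m ≤ b + 2 - a) :
    ∃ Q : F[X], Q.natDegree = m ∧ (∀ k ≤ m, Q.coeff k ≠ 0) ∧ Q.map φ = Q ∧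
      ∀ μ, a ≤ μ → μ ≤ b → Q.IsRoot (c * ζ ^ μ) := by
  set n := b + 1 - a
  set P := geomPoly ((c : F) * ζ ^ a) ζ n
  have hP : ∀ k ≤ n, P.coeff k ≠ 0 := fun k hk =>
    coeff_geomPoly_ne_zero (mul_ne_zero c.ne_zero (pow_ne_zero _ ζ.ne_zero))
      (by rwa [orderOf_units]) hk
  have hPφ : P.map φ = P := by
    have hφζ : φ ζ = (ζ⁻¹ : Fˣ) := by
      rw [Units.val_inv_eq_inv_val]; exact eq_inv_of_mul_eq_one_left hζ
    refine map_prod_X_sub_C_eq_self_of_reflect φ _ fun i hi => ?_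
    have hrefl : ζ ^ (a + (n - 1 - i)) = (ζ ^ (a + i))⁻¹ := by
      refine eq_inv_of_mul_eq_one_left ?_
      rw [← pow_add, show a + (n - 1 - i) + (a + i) = a + b by omega]
      exact orderOf_dvd_iff_pow_eq_one.mp hab
    have key : c * ζ⁻¹ ^ (a + i) = c * ζ ^ a * ζ ^ (n - 1 - i) := by
      rw [mul_assoc, ← pow_add, hrefl, inv_pow]
    rw [map_mul, map_mul, map_pow, map_pow, hc, hφζ, mul_assoc, ← pow_add]
    exact_mod_cast key
  have hProot : ∀ μ, a ≤ μ → μ ≤ b → P.IsRoot (c * ζ ^ μ) := fun μ hμa hμb => by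
    simpa only [mul_assoc, ← pow_add, Nat.add_sub_cancel' hμa] using
      isRoot_geomPoly (c * ζ ^ a : F) ζ n (i := μ - a) (by omega)
  obtain rfl | rfl : m = n ∨ m = n + 1 := by omega
  · exact ⟨P, natDegree_geomPoly .., hP, hPφ, hProot⟩
  · have hPn : P.coeff (n + 1) = 0 :=
      coeff_eq_zero_of_natDegree_lt (by rw [natDegree_geomPoly]; omega)
    obtain ⟨d, hdφ, hd⟩ := exists_fixed_coeff_mul_X_sub_C_ne_zero φ hP hPn hc hnc
    refine ⟨P * (X - C d), ?_, hd, ?_, fun μ hμa hμb => ?_⟩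
    · rw [natDegree_mul (geomPoly_monic ..).ne_zero (X_sub_C_ne_zero d), natDegree_geomPoly,
        natDegree_X_sub_C]
    · rw [Polynomial.map_mul, hPφ, Polynomial.map_sub, map_X, map_C, hdφ]
    · rw [IsRoot, eval_mul, hProot μ hμa hμb, zero_mul]

end Field

end Polynomial

theorem stmt_10_general (q s h : ℕ) (hsdvd : s ∣ q + 1)
    (hh : 1 ≤ h) (hhs : h ≤ s - 1)
    (F : Type*) [Field F] [Fintype F] (hF : Fintype.card F = q ^ 2)
    (g : Fˣ) (hg : orderOf g = q ^ 2 - 1) :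
    ∃ u : ℕ → F, (∀ k < h, u k ≠ 0 ∧ (u k) ^ q = u k) ∧
      ∀ μ : ℕ, (s - h + 1) / 2 + 1 ≤ μ → μ ≤ (s + h) / 2 - 1 →
        ∑ k ∈ Finset.range h,
          ((g ^ ((k : ℤ) * ((μ : ℤ) * (((q ^ 2 - 1) / s : ℕ) : ℤ) - q - 1)) : Fˣ) : F) * u k
            = 0 := by
  obtain ⟨φ, hφ⟩ := exists_ringHom_eq_pow_of_card_eq_pow hF two_ne_zero
  set l := (q ^ 2 - 1) / s
  have hN : q ^ 2 - 1 ≠ 0 := hg ▸ (orderOf_pos g).ne'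
  have hq : 1 < q := (Nat.one_lt_pow_iff two_ne_zero).mp (by omega)
  have hsq : s ≤ q + 1 := Nat.le_of_dvd q.succ_pos hsdvd
  have hq1 : q ^ 2 - 1 = (q - 1) * (q + 1) := by rw [mul_comm, ← Nat.sq_sub_sq, one_pow]
  have hsl : q ^ 2 - 1 = s * l :=
    (Nat.mul_div_cancel' (hsdvd.trans (Dvd.intro_left _ hq1.symm))).symm
  set c := g ^ (q + 1)
  set ζ := g ^ l
  have hc : orderOf c = q - 1 := orderOf_pow_of_orderOf_eq_mul (hg.trans hq1) q.succ_pos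
  have hζ : orderOf ζ = s := orderOf_pow_of_orderOf_eq_mul (hg.trans hsl)
    (Nat.pos_of_ne_zero (right_ne_zero_of_mul (hsl ▸ hN)))
  have hcφ : φ (c⁻¹ : Fˣ) = (c⁻¹ : Fˣ) := by
    rw [hφ, ← Units.val_pow_eq_pow_val, inv_pow, ← Nat.sub_add_cancel hq.le, pow_succ, ← hc,
      pow_orderOf_eq_one, one_mul]
  have hζφ : φ ζ * ζ = 1 := by
    rw [hφ, ← Units.val_pow_eq_pow_val, ← Units.val_mul, ← pow_succ,
      orderOf_dvd_iff_pow_eq_one.mp (hζ ▸ hsdvd), Units.val_one]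
  obtain ⟨Q, hQdeg, hQcoeff, hQφ, hQroot⟩ := exists_fixed_poly_isRoot_window φ hcφ hζφ
    (a := (s - h + 1) / 2 + 1) (b := (s + h) / 2 - 1) (m := h - 1)
    (by rw [hζ]; exact ⟨1, by omega⟩) (by rw [hζ]; omega) (by rw [orderOf_inv, hc]; omega)
    (by omega) (by omega)
  refine ⟨Q.coeff, fun k hk => ⟨hQcoeff k (by omega), by rw [← hφ, ← coeff_map, hQφ]⟩,
    fun μ hμa hμb => ?_⟩
  have hroot : g ^ ((μ : ℤ) * l - q - 1) = c⁻¹ * ζ ^ μ := by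
    simp only [c, ζ, ← zpow_natCast, ← zpow_neg, ← zpow_mul, ← zpow_add]
    congr 1; push_cast; ring
  rw [sum_range_zpow_mul_coeff_eq_eval g _ (by omega), hroot]
  exact_mod_cast hQroot μ hμa hμb

theorem stmt_10 (q s h : ℕ) (hq : IsPrimePow q) (hqodd : Odd q)
    (hsodd : Odd s) (hsdvd : s ∣ q + 1)
    (hh : 1 ≤ h) (hhs : h ≤ s - 1)
    (F : Type*) [Field F] [Fintype F] (hF : Fintype.card F = q ^ 2)
    (g : Fˣ) (hg : orderOf g = q ^ 2 - 1) :
    ∃ u : ℕ → F, (∀ k < h, u k ≠ 0 ∧ (u k) ^ q = u k) ∧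
      ∀ μ : ℕ, (s - h + 1) / 2 + 1 ≤ μ → μ ≤ (s + h) / 2 - 1 →
        ∑ k ∈ Finset.range h,
          ((g ^ ((k : ℤ) * ((μ : ℤ) * (((q ^ 2 - 1) / s : ℕ) : ℤ) - q - 1)) : Fˣ) : F) * u k
            = 0 :=
  stmt_10_general q s h hsdvd hh hhs F hF g hg
end

section
/- Let F be a field, h ≥ 2 an integer, and A an (h-2)×h matrix over F of rank h-2. Suppose the matrix A_0 obtained by deleting the first column of A and the matrix A_{h-1} obtained by deleting the last column of A each admit a kernel vector with all coordinates nonzero: x = (x_1,...,x_{h-1}) and y = (y_0,...,y_{h-2}) respectively, all coordinates in a subfield K^* where |K| > h. Then there exists λ ∈ K^* such that u = (0, x_1, ..., x_{h-1}) - λ·(y_0, ..., y_{h-2}, 0) has all h coordinates nonzero and satisfies A·uᵀ = 0. -/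
theorem stmt_12 (F : Type*) [Field F] (K : Subfield F) [Fintype K] (n : ℕ)
    (hK : n + 2 < Fintype.card K)
    (A : Matrix (Fin n) (Fin (n + 2)) F) (hrank : A.rank = n)
    (x y : Fin (n + 1) → F)
    (hx : ∀ i, x i ∈ K ∧ x i ≠ 0) (hy : ∀ i, y i ∈ K ∧ y i ≠ 0)
    (hx0 : (A.submatrix id Fin.succ).mulVec x = 0)
    (hy0 : (A.submatrix id Fin.castSucc).mulVec y = 0) :
    ∃ lam : F, lam ∈ K ∧ lam ≠ 0 ∧
      (∀ i : Fin (n + 2), (Fin.cons (0 : F) x : Fin (n + 2) → F) i - lam * (Fin.snoc y (0 : F) : Fin (n + 2) → F) i ≠ 0) ∧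
      A.mulVec (fun i => (Fin.cons (0 : F) x : Fin (n + 2) → F) i - lam * (Fin.snoc y (0 : F) : Fin (n + 2) → F) i) = 0 := by
  classical
  -- choose lam in K avoiding 0 and the ratios
  set g : Fin n → K := fun k =>
    (⟨x k.castSucc, (hx _).1⟩ : K) / (⟨y k.succ, (hy _).1⟩ : K) with hg
  set S : Finset K := insert 0 (Finset.image g Finset.univ) with hS
  have hcard : S.card < Fintype.card K := by
    calc S.card ≤ (Finset.image g Finset.univ).card + 1 := Finset.card_insert_le _ _
    _ ≤ n + 1 := by
        have := Finset.card_image_le (f := g) (s := Finset.univ)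
        simpa using Nat.add_le_add_right (by simpa using this) 1
    _ < Fintype.card K := by omega
  have hcompl : (Sᶜ : Finset K).Nonempty := by
    rw [← Finset.card_pos, Finset.card_compl]
    omega
  obtain ⟨lam, hlam⟩ := hcompl
  rw [Finset.mem_compl] at hlam
  have hlam0 : lam ≠ 0 := fun h => hlam (by simp [hS, h])
  have hlamg : ∀ k, lam ≠ g k := fun k h => hlam (by simp [hS, h])
  refine ⟨(lam : F), lam.2, ?_, ?_, ?_⟩
  · exact fun h => hlam0 (by exact_mod_cast Subtype.ext h)
  · intro i
    induction i using Fin.cases with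
    | zero =>
        have e0 : (Fin.cons (0 : F) x : Fin (n + 2) → F) 0 = 0 := Fin.cons_zero _ _
        have e0' : (Fin.snoc y (0 : F) : Fin (n + 2) → F) 0 = y 0 := by
          rw [show (0 : Fin (n + 2)) = (0 : Fin (n + 1)).castSucc from rfl,
            Fin.snoc_castSucc]
        rw [e0, e0']
        rw [zero_sub, neg_ne_zero]
        intro h
        rcases mul_eq_zero.1 h with h' | h'
        · exact hlam0 (by exact_mod_cast Subtype.ext h')
        · exact (hy 0).2 h'
    | succ j =>
        induction j using Fin.lastCases with
        | last =>
            have h1 : (Fin.last n).succ = Fin.last (n + 1) := rfl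
            rw [h1]
            simp only [Fin.cons_succ, Fin.snoc_last]
            simpa using (hx (Fin.last n)).2
        | cast k =>
            simp only [Fin.cons_succ]
            simp only [Fin.succ_castSucc, Fin.snoc_castSucc]
            intro h
            apply hlamg k
            have hyk := (hy k.succ).2
            have hx' : x k.castSucc = (lam : F) * y k.succ := by
              have := sub_eq_zero.mp h
              linear_combination this
            apply Subtype.ext
            show (lam : F) = ((g k : K) : F)
            rw [hg]
            push_cast
            rw [eq_div_iff hyk]
            exact hx'.symm
  · have e1 : (fun i => (Fin.cons (0 : F) x : Fin (n + 2) → F) i -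
        (lam : F) * (Fin.snoc y (0 : F) : Fin (n + 2) → F) i)
        = (Fin.cons (0 : F) x : Fin (n + 2) → F) - (lam : F) • (Fin.snoc y (0 : F) : Fin (n + 2) → F) := by
      funext i; simp [Pi.sub_apply, Pi.smul_apply, smul_eq_mul]
    rw [e1, Matrix.mulVec_sub, Matrix.mulVec_smul]
    have h2 : A.mulVec (Fin.cons (0 : F) x) = (A.submatrix id Fin.succ).mulVec x := by
      funext j
      simp [Matrix.mulVec, dotProduct, Fin.sum_univ_succ]
    have h3 : A.mulVec (Fin.snoc y (0 : F)) = (A.submatrix id Fin.castSucc).mulVec y := by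
      funext j
      simp [Matrix.mulVec, dotProduct, Fin.sum_univ_castSucc]
    rw [h2, h3, hx0, hy0]
    simp
end

section
/- Let q be an odd prime power, s an odd divisor of q+1, h an odd integer with 1 ≤ h ≤ s-1, l = (q²-1)/s, g a primitive element of F_{q²}, and δ = g^s (of order l). Suppose u_0,...,u_{h-1} ∈ F_q^* satisfy u_0+...+u_{h-1} = 1 and Σ_k g^{kμl} u_k = 0 for all (s-h)/2+1 ≤ μ ≤ (s+h)/2-1. Let e, v_0,...,v_{h-1} ∈ F_{q²} satisfy e^{q+1} = -l and v_k^{q+1} = u_k. Define a₁ ∈ F_{q²}^{1+lh} with coordinates (0, g^k δ^ν for 0 ≤ k ≤ h-1, 0 ≤ ν ≤ l-1) and v₁ with coordinates (e, v_k repeated l times for each k). Then Σ over all coordinates of a₁^{qi+j}·v₁^{q+1} equals 0 for all 0 ≤ i, j ≤ ((s+h)/2)·((q+1)/s) - 2. -/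
/-!
Put `m = qi + j` and `δ = g^s`, a primitive `l`-th root of unity. The sum over `ν` is
`∑_ν δ^{νm}`, which is `l` if `l ∣ m` and `0` otherwise, so the expression equals
`0^m e^{q+1} + [l ∣ m] l ∑_k g^{km} u_k`. For `m = 0` this is `-l + l`. For `m = μl ≠ 0`, write
`t = (q+1)/s`, so `l = (q-1)t`; since `i, j < ((s+h)/2) t ≤ q`, comparing base-`q` digits in
`qi + j = q(tμ) - tμ` gives `j + tμ = q`, which forces `(s-h)/2 < μ < (s+h)/2`, and there the
hypothesis on the `u_k` makes `∑_k g^{kμl} u_k` vanish.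
-/

open Finset

lemma IsPrimitiveRoot.sum_range_pow_pow {F : Type*} [Field F] {δ : F} {l : ℕ}
    (hδ : IsPrimitiveRoot δ l) (m : ℕ) :
    ∑ ν ∈ range l, (δ ^ ν) ^ m = if l ∣ m then (l : F) else 0 := by
  simp_rw [← pow_mul, mul_comm _ m, pow_mul]
  split_ifs with hlm
  · simp [(hδ.pow_eq_one_iff_dvd m).2 hlm]
  · have hne : δ ^ m ≠ 1 := mt (hδ.pow_eq_one_iff_dvd m).1 hlm
    rw [geom_sum_eq hne, ← pow_mul, mul_comm, pow_mul, hδ.pow_eq_one, one_pow, sub_self, zero_div]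

section BaseQDigits

variable {q s t a μ i j : ℕ}

lemma lt_of_mul_add_eq_pred_mul (hst : q + 1 = s * t) (has : a < s) (hi : i + 2 ≤ a * t)
    (hj : j + 2 ≤ a * t) (heq : q * i + j = (q - 1) * t * μ) : μ < a := by
  have ht : 0 < t := by nlinarith
  have hq : 2 ≤ q := by nlinarith
  have hlt : (q - 1) * t * μ < (q - 1) * t * a := by
    zify [hq.trans' one_le_two] at heq hst hi hj ⊢
    nlinarith [mul_lt_mul_of_pos_right (by exact_mod_cast has : (a : ℤ) < s)
      (by exact_mod_cast ht : (0 : ℤ) < t)]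
  exact lt_of_mul_lt_mul_left hlt (Nat.zero_le _)

lemma lt_add_of_mul_add_eq_pred_mul (hst : q + 1 = s * t) (has : a < s) (hi : i + 2 ≤ a * t)
    (hj : j + 2 ≤ a * t) (hμ : 0 < μ) (heq : q * i + j = (q - 1) * t * μ) : s < μ + a := by
  have hμa := lt_of_mul_add_eq_pred_mul hst has hi hj heq
  have ht : 0 < t := by nlinarith
  have hq : 1 ≤ q := by nlinarith
  have hcarry : q * (t * μ) = q * i + (j + t * μ) := by
    zify [hq] at heq ⊢; linear_combination -heq
  -- `j + tμ` is a positive multiple of `q` below `2q`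
  have hdigit : j + t * μ = q := by
    refine Nat.eq_of_dvd_of_lt_two_mul (Nat.add_pos_right _ (Nat.mul_pos ht hμ)).ne' ?_ ?_
    · exact (Nat.dvd_add_right (dvd_mul_right q i)).mp ⟨t * μ, hcarry.symm⟩
    · nlinarith
  nlinarith

lemma sub_div_two_lt_and_lt_add_div_two_of_mul_add_eq {h : ℕ} (hst : q + 1 = s * t)
    (hs : Odd s) (hh : Odd h) (hhs : h ≤ s - 1) (hi : i ≤ (s + h) / 2 * t - 2)
    (hj : j ≤ (s + h) / 2 * t - 2) (hμ : 0 < μ) (heq : q * i + j = (q - 1) * t * μ) :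
    (s - h) / 2 < μ ∧ μ < (s + h) / 2 := by
  have hs2 := Nat.odd_iff.mp hs
  have hh2 := Nat.odd_iff.mp hh
  have has : (s + h) / 2 < s := by omega
  have ht : 0 < t := Nat.pos_of_ne_zero (by rintro rfl; simp at hst)
  have hat : 2 ≤ (s + h) / 2 * t :=
    (show 2 ≤ (s + h) / 2 by omega).trans (Nat.le_mul_of_pos_right _ ht)
  have hlo := lt_add_of_mul_add_eq_pred_mul hst has (by omega) (by omega) hμ heq
  have hhi := lt_of_mul_add_eq_pred_mul hst has (by omega) (by omega) heq
  omega

end BaseQDigits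

theorem stmt_14_general (q s h : ℕ)
    (hsodd : Odd s) (hsdvd : s ∣ q + 1)
    (hhodd : Odd h) (hhs : h ≤ s - 1)
    (F : Type*) [Field F]
    (g : F) (hg : orderOf g = q ^ 2 - 1)
    (u v : ℕ → F) (e : F)
    (husum : ∑ k ∈ Finset.range h, u k = 1)
    (humu : ∀ μ : ℕ, (s - h) / 2 + 1 ≤ μ → μ ≤ (s + h) / 2 - 1 →
      ∑ k ∈ Finset.range h, g ^ (k * (μ * ((q ^ 2 - 1) / s))) * u k = 0)
    (he : e ^ (q + 1) = - (((q ^ 2 - 1) / s : ℕ) : F))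
    (hv : ∀ k < h, (v k) ^ (q + 1) = u k)
    (i j : ℕ) (hi : i ≤ (s + h) / 2 * ((q + 1) / s) - 2)
    (hj : j ≤ (s + h) / 2 * ((q + 1) / s) - 2) :
    (0 : F) ^ (q * i + j) * e ^ (q + 1)
      + ∑ k ∈ Finset.range h, ∑ ν ∈ Finset.range ((q ^ 2 - 1) / s),
          (g ^ k * (g ^ s) ^ ν) ^ (q * i + j) * (v k) ^ (q + 1) = 0 := by
  obtain ⟨t, hst⟩ := hsdvd
  have hs : s ≠ 0 := by rintro rfl; simp at hst
  have hfac : q ^ 2 - 1 = s * ((q - 1) * t) := by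
    rw [show q ^ 2 - 1 = (q + 1) * (q - 1) by simpa using Nat.sq_sub_sq q 1, hst]; ring
  have hl : (q ^ 2 - 1) / s = (q - 1) * t := by
    rw [hfac, Nat.mul_div_cancel_left _ (Nat.pos_of_ne_zero hs)]
  have hδ : IsPrimitiveRoot (g ^ s) ((q ^ 2 - 1) / s) := by
    rw [← hg, ← orderOf_pow_of_dvd hs ⟨_, hg.trans hfac⟩]
    exact IsPrimitiveRoot.orderOf _
  set l := (q ^ 2 - 1) / s
  set m := q * i + j
  have hsum : ∑ k ∈ range h, ∑ ν ∈ range l, (g ^ k * (g ^ s) ^ ν) ^ m * v k ^ (q + 1)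
      = (∑ k ∈ range h, (g ^ k) ^ m * u k) * if l ∣ m then (l : F) else 0 := by
    rw [sum_mul]
    refine sum_congr rfl fun k hk => ?_
    simp_rw [mul_pow, hv k (mem_range.mp hk), ← hδ.sum_range_pow_pow m, mul_sum]
    exact sum_congr rfl fun ν _ => by ring
  rw [hsum]
  rcases eq_or_ne m 0 with hm | hm
  · simp [hm, he, husum]
  rw [zero_pow hm, zero_mul, zero_add]
  split_ifs with hlm
  · obtain ⟨μ, hμ⟩ := hlm
    have hμ0 : 0 < μ := Nat.pos_of_ne_zero (by rintro rfl; exact hm hμ)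
    rw [Nat.div_eq_of_eq_mul_right (Nat.pos_of_ne_zero hs) hst] at hi hj
    obtain ⟨hlo, hhi⟩ := sub_div_two_lt_and_lt_add_div_two_of_mul_add_eq hst hsodd hhodd hhs
      hi hj hμ0 (by rw [← hl]; exact hμ)
    simp_rw [← pow_mul, hμ, mul_comm l μ]
    rw [humu μ (by omega) (by omega), zero_mul]
  · rw [mul_zero]

theorem stmt_14 (q s h : ℕ) (hq : IsPrimePow q) (hqodd : Odd q)
    (hsodd : Odd s) (hsdvd : s ∣ q + 1)
    (hh : 1 ≤ h) (hhodd : Odd h) (hhs : h ≤ s - 1)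
    (F : Type*) [Field F] [Fintype F] (hF : Fintype.card F = q ^ 2)
    (g : F) (hg : orderOf g = q ^ 2 - 1)
    (u v : ℕ → F) (e : F)
    (hu : ∀ k < h, u k ≠ 0 ∧ (u k) ^ q = u k)
    (husum : ∑ k ∈ Finset.range h, u k = 1)
    (humu : ∀ μ : ℕ, (s - h) / 2 + 1 ≤ μ → μ ≤ (s + h) / 2 - 1 →
      ∑ k ∈ Finset.range h, g ^ (k * (μ * ((q ^ 2 - 1) / s))) * u k = 0)
    (he : e ^ (q + 1) = - (((q ^ 2 - 1) / s : ℕ) : F))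
    (hv : ∀ k < h, (v k) ^ (q + 1) = u k)
    (i j : ℕ) (hi : i ≤ (s + h) / 2 * ((q + 1) / s) - 2)
    (hj : j ≤ (s + h) / 2 * ((q + 1) / s) - 2) :
    (0 : F) ^ (q * i + j) * e ^ (q + 1)
      + ∑ k ∈ Finset.range h, ∑ ν ∈ Finset.range ((q ^ 2 - 1) / s),
          (g ^ k * (g ^ s) ^ ν) ^ (q * i + j) * (v k) ^ (q + 1) = 0 :=
  stmt_14_general q s h hsodd hsdvd hhodd hhs F g hg u v e husum humu he hv i j hi hj
end

section
/- Let q be an odd prime power, s an odd divisor of q+1, t an even divisor of q-1 with t ≥ 2, h ≤ s-1 and r ≤ t positive integers, l = (q²-1)/s, m = (q²-1)/t, and g a primitive element of F_{q²}. Set A = { g^α δ^i : 0 ≤ α ≤ h-1, 0 ≤ i ≤ l-1 } and B = { g^β θ^j : 0 ≤ β ≤ r-1, 0 ≤ j ≤ m-1 } where δ = g^s, θ = g^t. Then |A| = lh, |B| = mr, and |A ∩ B| = hr·(q²-1)/(st). -/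
/-!
Since `g` has order `N = q² - 1`, the map `n ↦ g ^ n` is injective on `[0, N)`, and `A`, `B` are
the images of the exponent sets `{n < N | n % s < h}` and `{n < N | n % t < r}`; hence `A ∩ B` is
the image of their intersection. As `s`, `t` and (being coprime) `s * t` divide `N`, each count is
`N / d` times the count over one period `d`, and over a period of length `s * t` the Chinese
remainder theorem gives exactly `h * r` solutions.
-/

open Finset Function

namespace Nat

variable {p : ℕ → Prop} [DecidablePred p]

theorem count_mul_of_periodic {a : ℕ} (hp : Periodic p a) (k : ℕ) :
    count p (a * k) = k * count p a := by
  induction k with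
  | zero => simp
  | succ k ih =>
    have shift : count (fun j => p (a * k + j)) a = count p a := by
      have hk : Periodic p (k * a) := by simpa using hp.nat_mul k
      have shift_iff (j : ℕ) : p (a * k + j) ↔ p j := by rw [add_comm, mul_comm, hk j]
      simp only [shift_iff]
    rw [Nat.mul_succ, count_add, ih, shift, Nat.succ_mul]

theorem count_of_periodic_of_dvd {d N : ℕ} (hp : Periodic p d) (hd : d ∣ N) :
    count p N = N / d * count p d := by
  obtain ⟨k, rfl⟩ := hd
  rcases d.eq_zero_or_pos with rfl | hd0
  · simp
  · rw [count_mul_of_periodic hp, Nat.mul_div_cancel_left k hd0]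

theorem count_mod_lt {c d : ℕ} (hcd : c ≤ d) : count (fun n => n % d < c) d = c := by
  suffices {n ∈ range d | n % d < c} = range c by
    rw [count_eq_card_filter_range, this, card_range]
  ext n
  simp only [mem_filter, mem_range]
  constructor
  · rintro ⟨hn, hnc⟩
    rwa [mod_eq_of_lt hn] at hnc
  · intro hn
    have hnd := hn.trans_le hcd
    exact ⟨hnd, by rwa [mod_eq_of_lt hnd]⟩

theorem count_mod_lt_and_mod_lt {s t h r : ℕ} (hst : Coprime s t) (hhs : h ≤ s)
    (hrt : r ≤ t) :
    count (fun n => n % s < h ∧ n % t < r) (s * t) = h * r := by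
  rw [count_eq_card_filter_range, show h * r = #(range h ×ˢ range r) by simp]
  apply card_nbij (fun n => (n % s, n % t))
  · intro n hn
    simp only [coe_filter, mem_range, Set.mem_ofPred_eq] at hn
    simpa only [mem_coe, mem_product, mem_range] using hn.2
  · intro m hm n hn hmn
    simp only [coe_filter, mem_range, Set.mem_ofPred_eq] at hm hn
    have hmod : m ≡ n [MOD s * t] :=
      (modEq_and_modEq_iff_modEq_mul hst).mp ⟨congrArg Prod.fst hmn, congrArg Prod.snd hmn⟩
    rwa [ModEq, mod_eq_of_lt hm.1, mod_eq_of_lt hn.1] at hmod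
  · rintro ⟨a, b⟩ hab
    simp only [coe_product, coe_range, Set.mem_prod, Set.mem_Iio] at hab
    have ha := hab.1.trans_le hhs
    have hb := hab.2.trans_le hrt
    set k := chineseRemainder hst a b
    have hks : k % s = a := by rw [k.2.1, mod_eq_of_lt ha]
    have hkt : k % t = b := by rw [k.2.2, mod_eq_of_lt hb]
    have hk : k < s * t := chineseRemainder_lt_mul hst a b (by omega) (by omega)
    refine ⟨k, ?_, Prod.ext hks hkt⟩
    simp only [coe_filter, mem_range, Set.mem_ofPred_eq, hks, hkt]
    exact ⟨hk, hab⟩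

theorem coprime_of_dvd_add_one_of_dvd_sub_one {q s t : ℕ} (hs : Odd s) (hsq : s ∣ q + 1)
    (htq : t ∣ q - 1) : Coprime s t := by
  have hdvd_two : gcd s t ∣ 2 := by
    have := Nat.dvd_sub ((gcd_dvd_left s t).trans hsq) ((gcd_dvd_right s t).trans htq)
    refine this.trans ?_
    rcases q with _ | q
    · simp
    · rw [show q + 1 + 1 - (q + 1 - 1) = 2 by omega]
  exact eq_one_of_dvd_one (hs.coprime_two_right ▸ dvd_gcd (gcd_dvd_left s t) hdvd_two)

end Nat

theorem setOf_pow_mul_pow_pow_eq_image {G : Type*} [Monoid G] (g : G) {N d c : ℕ} (hd : d ∣ N)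
    (hcd : c ≤ d) :
    {x | ∃ α < c, ∃ i < N / d, x = g ^ α * (g ^ d) ^ i} =
      (g ^ ·) '' {n | n < N ∧ n % d < c} := by
  ext x
  constructor
  · rintro ⟨α, hα, i, hi, rfl⟩
    have hαd : (α + d * i) % d = α := by
      rw [Nat.add_mul_mod_self_left, Nat.mod_eq_of_lt (hα.trans_le hcd)]
    refine ⟨α + d * i, ⟨?_, by rwa [hαd]⟩, by simp only [pow_add, pow_mul]⟩
    calc α + d * i < d * (i + 1) := by linarith
      _ ≤ d * (N / d) := Nat.mul_le_mul_left d hi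
      _ = N := Nat.mul_div_cancel' hd
  · rintro ⟨n, ⟨hn, hnc⟩, rfl⟩
    refine ⟨n % d, hnc, n / d, Nat.div_lt_div_of_lt_of_dvd hd hn, ?_⟩
    rw [← pow_mul, ← pow_add, Nat.mod_add_div]

theorem ncard_image_pow_setOf_lt {G : Type*} [Monoid G] {g : G} {N : ℕ} (hg : orderOf g = N)
    (p : ℕ → Prop) [DecidablePred p] :
    ((g ^ ·) '' {n | n < N ∧ p n}).ncard = Nat.count p N := by
  have hsub : {n | n < N ∧ p n} ⊆ Set.Iio (orderOf g) := fun n hn => hg ▸ hn.1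
  rw [(pow_injOn_Iio_orderOf.mono hsub).ncard_image, Nat.count_eq_card_filter_range,
    ← Set.ncard_coe_finset, coe_filter]
  simp only [mem_range]

theorem stmt_17_general (q s t h r : ℕ)
    (hsodd : Odd s) (hsdvd : s ∣ q + 1)
    (htdvd : t ∣ q - 1)
    (hhs : h ≤ s - 1) (hrt : r ≤ t)
    (F : Type*) [Field F]
    (g : F) (hg : orderOf g = q ^ 2 - 1) :
    let A : Set F := {x | ∃ α < h, ∃ i < (q ^ 2 - 1) / s, x = g ^ α * (g ^ s) ^ i}
    let B : Set F := {x | ∃ β < r, ∃ j < (q ^ 2 - 1) / t, x = g ^ β * (g ^ t) ^ j}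
    A.ncard = (q ^ 2 - 1) / s * h ∧ B.ncard = (q ^ 2 - 1) / t * r ∧
      (A ∩ B).ncard = h * r * ((q ^ 2 - 1) / (s * t)) := by
  intro A B
  set N := q ^ 2 - 1
  have hNq : N = (q + 1) * (q - 1) := by simpa using Nat.sq_sub_sq q 1
  have hst : Nat.Coprime s t := Nat.coprime_of_dvd_add_one_of_dvd_sub_one hsodd hsdvd htdvd
  have hsN : s ∣ N := hNq ▸ hsdvd.mul_right _
  have htN : t ∣ N := hNq ▸ htdvd.mul_left _
  have hhs' : h ≤ s := hhs.trans (Nat.sub_le s 1)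
  have hA : A = (g ^ ·) '' {n | n < N ∧ n % s < h} := setOf_pow_mul_pow_pow_eq_image g hsN hhs'
  have hB : B = (g ^ ·) '' {n | n < N ∧ n % t < r} := setOf_pow_mul_pow_pow_eq_image g htN hrt
  have hAB : A ∩ B = (g ^ ·) '' {n | n < N ∧ n % s < h ∧ n % t < r} := by
    have hinj : Set.InjOn (g ^ ·) (Set.Iio N) := hg ▸ pow_injOn_Iio_orderOf
    rw [hA, hB, ← hinj.image_inter (fun n hn => hn.1) (fun n hn => hn.1)]
    congr 1
    ext n
    simp only [Set.mem_inter_iff, Set.mem_ofPred_eq]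
    tauto
  refine ⟨?_, ?_, ?_⟩
  · rw [hA, ncard_image_pow_setOf_lt hg, Nat.count_of_periodic_of_dvd (fun n => by simp) hsN,
      Nat.count_mod_lt hhs']
  · rw [hB, ncard_image_pow_setOf_lt hg, Nat.count_of_periodic_of_dvd (fun n => by simp) htN,
      Nat.count_mod_lt hrt]
  · rw [hAB, ncard_image_pow_setOf_lt hg,
      Nat.count_of_periodic_of_dvd (fun n => by simp) (hst.mul_dvd_of_dvd_of_dvd hsN htN),
      Nat.count_mod_lt_and_mod_lt hst hhs' hrt, mul_comm]

theorem stmt_17 (q s t h r : ℕ) (hq : IsPrimePow q) (hqodd : Odd q)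
    (hsodd : Odd s) (hsdvd : s ∣ q + 1)
    (hteven : Even t) (ht2 : 2 ≤ t) (htdvd : t ∣ q - 1)
    (hh : 1 ≤ h) (hhs : h ≤ s - 1) (hr : 1 ≤ r) (hrt : r ≤ t)
    (F : Type*) [Field F] [Fintype F] (hF : Fintype.card F = q ^ 2)
    (g : F) (hg : orderOf g = q ^ 2 - 1) :
    let A : Set F := {x | ∃ α < h, ∃ i < (q ^ 2 - 1) / s, x = g ^ α * (g ^ s) ^ i}
    let B : Set F := {x | ∃ β < r, ∃ j < (q ^ 2 - 1) / t, x = g ^ β * (g ^ t) ^ j}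
    A.ncard = (q ^ 2 - 1) / s * h ∧ B.ncard = (q ^ 2 - 1) / t * r ∧
      (A ∩ B).ncard = h * r * ((q ^ 2 - 1) / (s * t)) :=
  stmt_17_general q s t h r hsodd hsdvd htdvd hhs hrt F g hg
end
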